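/- arXiv:1803.04466 — 7 statements merged into one kernel-verified Lean document; each statement's English description precedes it below -/
import Mathlib

section
/- Let G be a graph, S₁ and S₂ two disjoint subsets of V(G) that are k-linked. If each Sᵢ has a subset Tᵢ of size k−1 (i = 1,2) such that T₁ and T₂ are (k−1)-linked, then there exist vertices sᵢ ∈ Sᵢ \ Tᵢ (i = 1,2) such that T₁ ∪ {s₁} and T₂ ∪ {s₂} are k-linked. -/
/-- Two disjoint vertex sets `S₁`, `S₂` are `k`-linked: there are `k` pairwise
vertex-disjoint paths joining `k` distinct vertices of `S₁` to `k` distinct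
vertices of `S₂`, each path meeting each `Sᵢ` in exactly one vertex. -/
def SetsLinked {V : Type*} (G : SimpleGraph V) (k : ℕ) (S₁ S₂ : Set V) : Prop :=
  ∃ (a b : Fin k → V) (P : ∀ i, G.Walk (a i) (b i)),
    Function.Injective a ∧ Function.Injective b ∧
    (∀ i, a i ∈ S₁) ∧ (∀ i, b i ∈ S₂) ∧
    (∀ i, (P i).IsPath) ∧
    (∀ i, ∀ x ∈ (P i).support, x ∈ S₁ → x = a i) ∧
    (∀ i, ∀ x ∈ (P i).support, x ∈ S₂ → x = b i) ∧
    (∀ i j, i ≠ j → ∀ x, x ∈ (P i).support → x ∉ (P j).support)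

/-!
Add to `G` a vertex joined to every vertex of `S₁ \ T₁` and another joined to every vertex of
`S₂ \ T₂`, and enlarge `T₁` and `T₂` by these apexes. Every separator of the enlarged sets has
at least `k` vertices: if it contains an apex, it still has to cut the `k - 1` disjoint paths
from `T₁` to `T₂`; otherwise it has to cut each of the `k` disjoint paths from `S₁` to `S₂`,
extended through the apexes wherever they start outside `T₁` or end outside `T₂`. By Menger's
theorem the enlarged sets are `k`-linked; the path through the first apex continues to some
`s₁ ∈ S₁ \ T₁`, the path through the second one comes from some `s₂ ∈ S₂ \ T₂`, and removing
the apexes leaves a `k`-linkage of `T₁ ∪ {s₁}` and `T₂ ∪ {s₂}`.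

Menger's theorem is proved by Göring's induction on the number of edges: if `G - xy` has an
`A`–`B` separator `S` with `|S| < k`, then `S ∪ {x}` and `S ∪ {y}` separate `A` from `B` in `G`,
and by induction `A` is linked to `S ∪ {x}` and `S ∪ {y}` to `B` in `G - xy`; the edge `xy`
joins the two linkages.
-/

open SimpleGraph

namespace SimpleGraph

variable {V : Type*} {G : SimpleGraph V}

def Separates (G : SimpleGraph V) (A B X : Set V) : Prop :=
  ∀ a ∈ A, ∀ b ∈ B, ∀ p : G.Walk a b, ∃ z ∈ p.support, z ∈ X

lemma Separates.symm {A B X : Set V} (h : G.Separates A B X) : G.Separates B A X :=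
  fun b hb a ha p => by simpa using h a ha b hb p.reverse

namespace Walk

variable {u v w : V} {X : Set V}

lemma exists_walk_first_mem (p : G.Walk u v) (h : ∃ z ∈ p.support, z ∈ X) :
    ∃ w ∈ X, ∃ q : G.Walk u w, q.support ⊆ p.support ∧ ∀ z ∈ q.support, z ∈ X → z = w := by
  classical
  obtain ⟨w, hw, hwp, hfirst⟩ :=
    p.exists_mem_support_forall_mem_support_imp_eq {z ∈ p.support.toFinset | z ∈ X}
      (by obtain ⟨z, hz, hzX⟩ := h; exact ⟨z, by simp [hz, hzX]⟩)
  have hsub := p.support_takeUntil_subset_support hwp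
  exact ⟨w, (Finset.mem_filter.mp hw).2, p.takeUntil w hwp, hsub,
    fun z hz hzX => hfirst z (by simpa using ⟨hsub hz, hzX⟩) hz⟩

lemma exists_isPath_meeting_ends (p : G.Walk u v) {A B : Set V} (hu : u ∈ A) (hv : v ∈ B) :
    ∃ a ∈ A, ∃ b ∈ B, ∃ q : G.Walk a b, q.IsPath ∧ q.support ⊆ p.support ∧
      (∀ z ∈ q.support, z ∈ A → z = a) ∧ (∀ z ∈ q.support, z ∈ B → z = b) := by
  classical
  obtain ⟨b, hb, q₁, hq₁p, hq₁B⟩ := p.exists_walk_first_mem ⟨v, p.end_mem_support, hv⟩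
  obtain ⟨a, ha, q₂, hq₂q₁, hq₂A⟩ :=
    q₁.reverse.exists_walk_first_mem ⟨u, by simp, hu⟩
  have hsub : q₂.reverse.bypass.support ⊆ q₁.support := fun z hz => by
    simpa using hq₂q₁ (by simpa using q₂.reverse.support_bypass_subset_support hz)
  refine ⟨a, ha, b, hb, q₂.reverse.bypass, q₂.reverse.bypass_isPath, fun z hz => hq₁p (hsub hz),
    fun z hz hzA => hq₂A z ?_ hzA, fun z hz hzB => hq₁B z (hsub hz) hzB⟩
  simpa using q₂.reverse.support_bypass_subset_support hz

lemma IsPath.exists_walk_avoiding {p : G.Walk u v} (hp : p.IsPath)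
    (hX : ∀ z ∈ p.support, z ∈ X → z = v) (hw : w ∈ p.support) (hwX : w ∉ X) :
    ∃ q : G.Walk u w, ∀ z ∈ q.support, z ∉ X := by
  classical
  refine ⟨p.takeUntil w hw, fun z hz hzX => ?_⟩
  obtain rfl := hX z (p.support_takeUntil_subset_support hw hz) hzX
  exact endpoint_notMem_support_takeUntil hp hw (fun h => hwX (h ▸ hzX)) hz

end Walk

end SimpleGraph

theorem range_eq_of_injective_of_ncard_le {α : Type*} {k : ℕ} {f : Fin k → α} {X : Set α}
    (hf : Function.Injective f) (hfX : ∀ i, f i ∈ X) (hX : X.ncard ≤ k) (hXfin : X.Finite) :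
    Set.range f = X :=
  Set.eq_of_subset_of_ncard_le (Set.range_subset_iff.2 hfX)
    (by rwa [Set.ncard_range_of_injective hf, Nat.card_eq_fintype_card, Fintype.card_fin]) hXfin

namespace SetsLinked

variable {V : Type*} {G H : SimpleGraph V} {k : ℕ} {A B : Set V}

theorem of_walks {a b : Fin k → V} (P : ∀ i, G.Walk (a i) (b i)) (ha : ∀ i, a i ∈ A)
    (hb : ∀ i, b i ∈ B)
    (hP : ∀ i j, i ≠ j → ∀ x, x ∈ (P i).support → x ∉ (P j).support) :
    SetsLinked G k A B := by
  choose a' ha' b' hb' Q hQ hQP hQA hQB using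
    fun i => (P i).exists_isPath_meeting_ends (ha i) (hb i)
  have hdisj : ∀ i j, i ≠ j → ∀ x, x ∈ (Q i).support → x ∉ (Q j).support :=
    fun i j hij x hi hj => hP i j hij x (hQP i hi) (hQP j hj)
  refine ⟨a', b', Q, fun i j h => ?_, fun i j h => ?_, ha', hb', hQ, hQA, hQB, hdisj⟩
  · by_contra hij
    exact hdisj i j hij _ (Q i).start_mem_support (by rw [h]; exact (Q j).start_mem_support)
  · by_contra hij
    exact hdisj i j hij _ (Q i).end_mem_support (by rw [h]; exact (Q j).end_mem_support)

theorem mono (hHG : H ≤ G) (h : SetsLinked H k A B) : SetsLinked G k A B := by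
  obtain ⟨a, b, P, ha, hb, hA, hB, hP, hPA, hPB, hdisj⟩ := h
  refine ⟨a, b, fun i => (P i).mapLe hHG, ha, hb, hA, hB, fun i => (hP i).mapLe hHG, ?_, ?_, ?_⟩ <;>
    simpa only [Walk.support_mapLe_eq_support]

theorem of_le_ncard_inter [Finite V] (h : k ≤ (A ∩ B).ncard) : SetsLinked G k A B := by
  obtain ⟨t, htAB, htk⟩ := Set.exists_subset_card_eq h
  let e : t ≃ Fin k := Finite.equivFinOfCardEq (by rw [Nat.card_coe_set_eq, htk])
  refine of_walks (fun i => (Walk.nil : G.Walk (e.symm i) (e.symm i)))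
    (fun i => (htAB (e.symm i).2).1) (fun i => (htAB (e.symm i).2).2) fun i j hij z hi hj => ?_
  simp only [Walk.support_nil, List.mem_singleton] at hi hj
  exact hij (e.symm.injective (Subtype.ext (hi.symm.trans hj)))

/-- Paths of the two linkages can only meet inside `X`: a common vertex outside `X` would
give an `A`–`B` walk avoiding `X`. -/
theorem trans [Finite V] {X : Set V} (hX : G.Separates A B X) (hXk : X.ncard ≤ k)
    (h₁ : SetsLinked G k A X) (h₂ : SetsLinked G k X B) : SetsLinked G k A B := by
  obtain ⟨a, b, P, -, hb, ha, hbX, hP, -, hPX, hPdisj⟩ := h₁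
  obtain ⟨a₂, b₂, Q, ha₂, -, ha₂X, hb₂, hQ, hQX, -, hQdisj⟩ := h₂
  have hrange := range_eq_of_injective_of_ncard_le ha₂ ha₂X hXk X.toFinite
  choose σ hσ using fun i => (show b i ∈ Set.range a₂ from hrange ▸ hbX i)
  have cross : ∀ i j, ∀ z ∈ (P i).support, z ∈ (Q j).support → z = b i ∧ z = a₂ j := by
    intro i j z hzP hzQ
    by_cases hzX : z ∈ X
    · exact ⟨hPX i z hzP hzX, hQX j z hzQ hzX⟩
    obtain ⟨p₁, hp₁⟩ := (hP i).exists_walk_avoiding (hPX i) hzP hzX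
    obtain ⟨p₂, hp₂⟩ := (hQ j).reverse.exists_walk_avoiding (by simpa using hQX j)
      (by simpa using hzQ) hzX
    obtain ⟨w, hw, hwX⟩ := hX _ (ha i) _ (hb₂ j) (p₁.append p₂.reverse)
    rw [Walk.mem_support_append_iff, Walk.support_reverse, List.mem_reverse] at hw
    exact (hw.elim (hp₁ w) (hp₂ w) hwX).elim
  refine of_walks (fun i => (P i).append ((Q (σ i)).copy (hσ i) rfl)) ha
    (fun i => hb₂ _) fun i j hij z hi hj => ?_
  simp only [Walk.mem_support_append_iff, Walk.support_copy] at hi hj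
  rcases hi with hi | hi <;> rcases hj with hj | hj
  · exact hPdisj i j hij z hi hj
  · obtain ⟨h₁, h₂⟩ := cross i (σ j) z hi hj
    exact hij (hb (h₁.symm.trans (h₂.trans (hσ j))))
  · obtain ⟨h₁, h₂⟩ := cross j (σ i) z hj hi
    exact hij (hb ((h₂.trans (hσ i)).symm.trans h₁))
  · exact hQdisj _ _ (fun h => hij (hb (by rw [← hσ i, ← hσ j, h]))) z hi hj

end SetsLinked

namespace SimpleGraph

variable {V : Type*} {G : SimpleGraph V} {u v x y : V} {A B S T X : Set V}

lemma Separates.insert_of_deleteEdges (h : (G.deleteEdges {s(x, y)}).Separates A B S) :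
    G.Separates A B (insert x S) := by
  intro a ha b hb p
  by_cases he : s(x, y) ∈ p.edges
  · exact ⟨x, p.fst_mem_support_of_mem_edges he, Set.mem_insert _ _⟩
  · obtain ⟨z, hz, hzS⟩ := h a ha b hb (p.toDeleteEdge _ he)
    exact ⟨z, by simpa using hz, Set.mem_insert_of_mem _ hzS⟩

lemma Separates.singleton_of_walk_avoiding (h : G.Separates A B S) {b : V} (hb : b ∈ B)
    (q : G.Walk y b) (hq : ∀ z ∈ q.support, z ∉ S) : G.Separates A {y} S := by
  rintro a ha _ rfl p
  obtain ⟨z, hz, hzS⟩ := h a ha b hb (p.append q)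
  rw [Walk.mem_support_append_iff] at hz
  exact ⟨z, hz.resolve_right fun hzq => hq z hzq hzS, hzS⟩

lemma Walk.exists_deleteEdges_walk_first_mem (hxy : x ≠ y) (hx : x ∈ X) (hy : y ∈ X)
    (p : G.Walk u v) (h : ∃ z ∈ p.support, z ∈ X) :
    ∃ w ∈ X, ∃ q : (G.deleteEdges {s(x, y)}).Walk u w,
      q.support ⊆ p.support ∧ ∀ z ∈ q.support, z ∈ X → z = w := by
  obtain ⟨w, hw, q, hqp, hqX⟩ := p.exists_walk_first_mem h
  have he : s(x, y) ∉ q.edges := fun he => hxy <|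
    (hqX x (q.fst_mem_support_of_mem_edges he) hx).trans
      (hqX y (q.snd_mem_support_of_mem_edges he) hy).symm
  exact ⟨w, hw, q.toDeleteEdge _ he, by simpa using hqp, by simpa using hqX⟩

/-- An `A`–`B` walk avoiding `S` crosses `xy`; `x'` is the end of the edge it reaches first. -/
lemma Separates.exists_orientation (hxy : G.Adj x y)
    (hS : (G.deleteEdges {s(x, y)}).Separates A B S) (hG : ¬ G.Separates A B S) :
    ∃ x' y', s(x', y') = s(x, y) ∧ x' ∉ S ∧ y' ∉ S ∧
      (G.deleteEdges {s(x, y)}).Separates A {y'} S ∧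
      (G.deleteEdges {s(x, y)}).Separates B {x'} S := by
  simp only [Separates, not_forall, not_exists, not_and] at hG
  obtain ⟨a, ha, b, hb, p, hpS⟩ := hG
  have he : s(x, y) ∈ p.edges := by
    by_contra he
    obtain ⟨z, hz, hzS⟩ := hS a ha b hb (p.toDeleteEdge _ he)
    exact hpS z (by simpa using hz) hzS
  have hxX : x ∈ ({x, y} : Set V) := Set.mem_insert _ _
  have hyX : y ∈ ({x, y} : Set V) := Set.mem_insert_of_mem _ rfl
  obtain ⟨x', hx', q₁, hq₁p, -⟩ := p.exists_deleteEdges_walk_first_mem hxy.ne hxX hyX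
    ⟨x, p.fst_mem_support_of_mem_edges he, hxX⟩
  obtain ⟨y', hy', q₂, hq₂p, -⟩ := p.reverse.exists_deleteEdges_walk_first_mem hxy.ne hxX hyX
    ⟨x, by simpa using p.fst_mem_support_of_mem_edges he, hxX⟩
  have hq₁S : ∀ z ∈ q₁.support, z ∉ S := fun z hz => hpS z (hq₁p hz)
  have hq₂S : ∀ z ∈ q₂.reverse.support, z ∉ S := fun z hz =>
    hpS z (by simpa using hq₂p (by simpa using hz))
  have hne : x' ≠ y' := by
    rintro rfl
    obtain ⟨z, hz, hzS⟩ := hS a ha b hb (q₁.append q₂.reverse)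
    rw [Walk.mem_support_append_iff] at hz
    exact hz.elim (hq₁S z · hzS) (hq₂S z · hzS)
  refine ⟨x', y', ?_, hq₁S x' q₁.end_mem_support, hq₂S y' q₂.reverse.start_mem_support,
    hS.singleton_of_walk_avoiding hb q₂.reverse hq₂S,
    hS.symm.singleton_of_walk_avoiding ha q₁.reverse (by simpa using hq₁S)⟩
  simp only [Set.mem_insert_iff, Set.mem_singleton_iff] at hx' hy'
  rcases hx' with rfl | rfl <;> rcases hy' with rfl | rfl <;> simp_all [Sym2.eq_swap]

lemma Separates.of_deleteEdges_insert (hxy : x ≠ y)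
    (hS : (G.deleteEdges {s(x, y)}).Separates A B S)
    (hAy : (G.deleteEdges {s(x, y)}).Separates A {y} S) (hyS : y ∉ S)
    (hT : (G.deleteEdges {s(x, y)}).Separates A (insert x S) T) : G.Separates A B T := by
  intro a ha b hb p
  have hxX : x ∈ insert x (insert y S) := Set.mem_insert _ _
  have hyX : y ∈ insert x (insert y S) := Set.mem_insert_of_mem _ (Set.mem_insert _ _)
  obtain ⟨z, hz, hzS⟩ := hS.insert_of_deleteEdges a ha b hb p
  obtain ⟨w, hw, q, hqp, hqX⟩ := p.exists_deleteEdges_walk_first_mem hxy hxX hyX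
    ⟨z, hz, Set.insert_subset_insert (Set.subset_insert _ _) hzS⟩
  have hwy : w ≠ y := by
    rintro rfl
    obtain ⟨z, hz, hzS⟩ := hAy a ha w rfl q
    exact hyS (hqX z hz (Set.mem_insert_of_mem _ (Set.mem_insert_of_mem _ hzS)) ▸ hzS)
  have hw' : w ∈ insert x S := by
    simp only [Set.mem_insert_iff] at hw ⊢
    tauto
  obtain ⟨t, ht, htT⟩ := hT a ha w hw' q
  exact ⟨t, hqp ht, htT⟩

end SimpleGraph

namespace SetsLinked

variable {V : Type*} {G H : SimpleGraph V} {k : ℕ} {x y : V} {A S : Set V}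

/-- No path of the linkage passes through `y`, so the one ending at `x` extends along `xy`. -/
theorem extend_along_edge (hHG : H ≤ G) (hxy : G.Adj x y) (hAy : H.Separates A {y} S)
    (hyS : y ∉ S) (h : SetsLinked H k A (insert x S)) : SetsLinked G k A (insert y S) := by
  obtain ⟨a, b, P, -, hb, ha, hbS, hP, -, hPS, hdisj⟩ := h
  have hyP : ∀ i, y ∉ (P i).support := by
    intro i hy
    obtain ⟨q, hq⟩ := (hP i).exists_walk_avoiding (hPS i) hy (by simp [hxy.ne.symm, hyS])
    obtain ⟨z, hz, hzS⟩ := hAy _ (ha i) y rfl q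
    exact hq z hz (Set.mem_insert_of_mem _ hzS)
  have hext : ∀ i, ∃ c ∈ insert y S, ∃ W : G.Walk (a i) c,
      ∀ z ∈ W.support, z ∈ (P i).support ∨ (z = y ∧ b i = x) := by
    intro i
    by_cases hbx : b i = x
    · refine ⟨y, Set.mem_insert _ _, ((P i).mapLe hHG).concat (hbx ▸ hxy), fun z hz => ?_⟩
      rw [Walk.support_concat, List.mem_append, List.mem_singleton,
        Walk.support_mapLe_eq_support] at hz
      exact hz.imp_right fun hzy => ⟨hzy, hbx⟩
    · exact ⟨b i, Set.mem_insert_of_mem _ ((hbS i).resolve_left hbx), (P i).mapLe hHG,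
        fun z hz => Or.inl (by simpa using hz)⟩
  choose c hc W hW using hext
  refine of_walks W ha hc fun i j hij z hi hj => ?_
  rcases hW i z hi with hi | ⟨rfl, hbi⟩ <;> rcases hW j z hj with hj | ⟨hzy, hbj⟩
  · exact hdisj i j hij z hi hj
  · exact hyP i (hzy ▸ hi)
  · exact hyP j hj
  · exact hij (hb (hbi.trans hbj.symm))

theorem of_deleteEdges_separates [Finite V] (hxy : G.Adj x y) {B : Set V}
    (hS : (G.deleteEdges {s(x, y)}).Separates A B S) (hSk : S.ncard < k) (hxS : x ∉ S)
    (hyS : y ∉ S) (hAy : (G.deleteEdges {s(x, y)}).Separates A {y} S)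
    (hBx : (G.deleteEdges {s(x, y)}).Separates B {x} S)
    (ih : ∀ A' B' : Set V, (∀ T, (G.deleteEdges {s(x, y)}).Separates A' B' T → k ≤ T.ncard) →
      SetsLinked (G.deleteEdges {s(x, y)}) k A' B')
    (h : ∀ T, G.Separates A B T → k ≤ T.ncard) : SetsLinked G k A B := by
  have hswap : s(x, y) = s(y, x) := Sym2.eq_swap
  have hA := ih A (insert x S) fun T hT => h T (hS.of_deleteEdges_insert hxy.ne hAy hyS hT)
  have hB := ih (insert y S) B fun T hT => h T <| by
    rw [hswap] at hS hBx hT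
    exact (hS.symm.of_deleteEdges_insert hxy.ne.symm hBx hxS hT.symm).symm
  rw [hswap] at hS
  exact trans hS.insert_of_deleteEdges ((Set.ncard_insert_le _ _).trans hSk)
    (hA.extend_along_edge (G.deleteEdges_le _) hxy hAy hyS) (hB.mono (G.deleteEdges_le _))

theorem of_forall_separates [Finite V] {B : Set V} (h : ∀ X, G.Separates A B X → k ≤ X.ncard) :
    SetsLinked G k A B := by
  induction G using WellFoundedLT.induction generalizing A B with
  | _ G ih =>
  by_cases hedge : ∃ x y, G.Adj x y
  swap
  · push Not at hedge
    refine of_le_ncard_inter (h _ fun a ha b hb p => ?_)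
    cases p with
    | nil => exact ⟨a, Walk.start_mem_support _, ha, hb⟩
    | cons hadj _ => exact absurd hadj (hedge _ _)
  obtain ⟨x, y, hxy⟩ := hedge
  have hlt : G.deleteEdges {s(x, y)} < G :=
    (G.deleteEdges_le _).lt_of_ne fun heq => by
      have := heq.symm ▸ hxy
      simp at this
  by_cases hH : ∀ X, (G.deleteEdges {s(x, y)}).Separates A B X → k ≤ X.ncard
  · exact (ih _ hlt hH).mono (G.deleteEdges_le _)
  push Not at hH
  obtain ⟨S, hS, hSk⟩ := hH
  obtain ⟨x', y', hedge, hxS, hyS, hAy, hBx⟩ :=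
    hS.exists_orientation hxy fun hG => (h S hG).not_gt hSk
  rw [← hedge] at hS hAy hBx hlt
  rw [← G.mem_edgeSet, ← hedge] at hxy
  exact of_deleteEdges_separates hxy hS hSk hxS hyS hAy hBx (fun _ _ => ih _ hlt) h

end SetsLinked

namespace SimpleGraph

variable {V : Type*} {G : SimpleGraph V} {U : Bool → Set V} {u v : V} {w w' : V ⊕ Bool}

def withApexes (G : SimpleGraph V) (U : Bool → Set V) : SimpleGraph (V ⊕ Bool) where
  Adj
    | .inl u, .inl v => G.Adj u v
    | .inl u, .inr c | .inr c, .inl u => u ∈ U c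
    | .inr _, .inr _ => False
  symm := ⟨by
    rintro (u | c) (v | c') h
    exacts [h.symm, h, h, h]⟩
  loopless := ⟨by
    rintro (u | c) h
    exacts [G.loopless.irrefl u h, h]⟩

@[simp] lemma withApexes_adj_inl_inl : (G.withApexes U).Adj (.inl u) (.inl v) ↔ G.Adj u v :=
  Iff.rfl

@[simp] lemma withApexes_adj_inr_inl {c : Bool} :
    (G.withApexes U).Adj (.inr c) (.inl u) ↔ u ∈ U c :=
  Iff.rfl

@[simp] lemma not_withApexes_adj_inr_inr {c c' : Bool} :
    ¬ (G.withApexes U).Adj (.inr c) (.inr c') :=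
  id

def Walk.toWithApexes (U : Bool → Set V) (p : G.Walk u v) :
    (G.withApexes U).Walk (.inl u) (.inl v) :=
  p.map (⟨Sum.inl, id⟩ : G →g G.withApexes U)

lemma Walk.support_toWithApexes (p : G.Walk u v) :
    (p.toWithApexes U).support = p.support.map .inl :=
  p.support_map _

lemma Walk.exists_walk_of_forall_inr_notMem (p : (G.withApexes U).Walk w w')
    (hp : ∀ c, .inr c ∉ p.support) (hw : w = .inl u) (hw' : w' = .inl v) :
    ∃ q : G.Walk u v, ∀ z ∈ q.support, .inl z ∈ p.support := by
  induction p generalizing u with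
  | nil =>
    obtain rfl := Sum.inl_injective (hw.symm.trans hw')
    exact ⟨.nil, by simp [hw]⟩
  | @cons _ m _ hadj p ih =>
    subst hw
    rcases m with m | c
    · obtain ⟨q, hq⟩ := ih (fun c hc => hp c (by simp [hc])) rfl hw'
      refine ⟨.cons (withApexes_adj_inl_inl.mp hadj) q, fun z hz => ?_⟩
      rw [Walk.support_cons, List.mem_cons] at hz ⊢
      exact hz.imp (congrArg _) (hq z)
    · exact (hp c (by simp)).elim

lemma Walk.IsPath.exists_inl_walk {c : Bool} {T : Set V} {p : (G.withApexes U).Walk w w'}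
    (hp : p.IsPath) (hw : w ∈ insert (.inr c) (.inl '' T)) (hw' : w' ≠ .inr c)
    (hc : .inr c ∈ p.support → .inr c = w) :
    ∃ u, ∃ q : (G.withApexes U).Walk (.inl u) w', q.IsPath ∧ q.support ⊆ p.support ∧
      .inr c ∉ q.support ∧ (w = .inl u ∨ w = .inr c ∧ u ∈ U c) := by
  rcases hw with rfl | ⟨u, -, rfl⟩
  · cases p with
    | nil => exact (hw' rfl).elim
    | @cons _ m _ hadj q =>
      obtain ⟨q_path, hcq⟩ := (Walk.cons_isPath_iff _ _).mp hp
      rcases m with u | c'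
      · exact ⟨u, q, q_path, by simp, hcq, Or.inr ⟨rfl, hadj⟩⟩
      · exact (not_withApexes_adj_inr_inr hadj).elim
  · exact ⟨u, p, hp, List.Subset.refl _, fun h => by simpa using hc h, Or.inl rfl⟩

lemma Walk.exists_walk_from_apex_side {c : Bool} {T : Set V}
    (p : (G.withApexes U).Walk (.inl u) w) (hu : u ∈ T ∨ u ∈ U c) :
    ∃ w₀ ∈ insert (.inr c) (.inl '' T), ∃ q : (G.withApexes U).Walk w₀ w,
      ∀ z ∈ q.support, z = .inr c ∨ z ∈ p.support := by
  rcases hu with hu | hu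
  · exact ⟨_, Set.mem_insert_of_mem _ ⟨u, hu, rfl⟩, p, fun z hz => Or.inr hz⟩
  · exact ⟨_, Set.mem_insert _ _, .cons (withApexes_adj_inr_inl.mpr hu) p, by simp⟩

theorem le_ncard_of_disjoint_walks [Finite V] {k : ℕ} {a b : Fin k → V} {Y : Set V}
    (P : ∀ i, G.Walk (a i) (b i))
    (hdisj : ∀ i j, i ≠ j → ∀ x, x ∈ (P i).support → x ∉ (P j).support)
    (hY : ∀ i, ∃ z ∈ (P i).support, z ∈ Y) : k ≤ Y.ncard := by
  choose z hzP hzY using hY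
  have hz : Function.Injective z := fun i j h => by
    by_contra hij
    exact hdisj i j hij _ (hzP i) (h ▸ hzP j)
  calc k = (Set.range z).ncard := by
        rw [Set.ncard_range_of_injective hz, Nat.card_eq_fintype_card, Fintype.card_fin]
    _ ≤ Y.ncard := Set.ncard_le_ncard (Set.range_subset_iff.2 hzY)

theorem le_ncard_of_separates_withApexes [Finite V] {k : ℕ} {S₁ S₂ T₁ T₂ : Set V} (hk : 1 ≤ k)
    (hU₁ : S₁ \ T₁ ⊆ U false) (hU₂ : S₂ \ T₂ ⊆ U true) (hS : SetsLinked G k S₁ S₂)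
    (hT : SetsLinked G (k - 1) T₁ T₂) {X : Set (V ⊕ Bool)}
    (hX : (G.withApexes U).Separates (insert (.inr false) (.inl '' T₁))
      (insert (.inr true) (.inl '' T₂)) X) : k ≤ X.ncard := by
  have hYX : (Sum.inl '' (Sum.inl ⁻¹' X)).ncard ≤ X.ncard :=
    Set.ncard_le_ncard (Set.image_preimage_subset _ _)
  rw [Set.ncard_image_of_injective _ Sum.inl_injective] at hYX
  by_cases hapex : ∃ c, .inr c ∈ X
  · obtain ⟨c, hc⟩ := hapex
    obtain ⟨a, b, Q, -, -, ha, hb, -, -, -, hdisj⟩ := hT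
    have hY : k - 1 ≤ (Sum.inl ⁻¹' X).ncard := le_ncard_of_disjoint_walks Q hdisj fun j => by
      obtain ⟨z, hz, hzX⟩ := hX _ (Set.mem_insert_of_mem _ ⟨_, ha j, rfl⟩) _
        (Set.mem_insert_of_mem _ ⟨_, hb j, rfl⟩) ((Q j).toWithApexes U)
      rw [Walk.support_toWithApexes, List.mem_map] at hz
      obtain ⟨w, hw, rfl⟩ := hz
      exact ⟨w, hw, hzX⟩
    have hins := Set.ncard_le_ncard (Set.insert_subset hc (Set.image_preimage_subset Sum.inl X))
    rw [Set.ncard_insert_of_notMem (by simp), Set.ncard_image_of_injective _ Sum.inl_injective]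
      at hins
    omega
  · push Not at hapex
    obtain ⟨a, b, P, -, -, ha, hb, -, -, -, hdisj⟩ := hS
    refine (le_ncard_of_disjoint_walks P hdisj fun i => ?_).trans hYX
    obtain ⟨w₀, hw₀, q₁, hq₁⟩ := ((P i).toWithApexes U).exists_walk_from_apex_side
      (c := false) ((em _).imp_right fun h => hU₁ ⟨ha i, h⟩)
    obtain ⟨w₁, hw₁, q₂, hq₂⟩ := q₁.reverse.exists_walk_from_apex_side
      (c := true) ((em _).imp_right fun h => hU₂ ⟨hb i, h⟩)
    obtain ⟨z, hz, hzX⟩ := hX w₀ hw₀ w₁ hw₁ q₂.reverse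
    rw [Walk.support_reverse, List.mem_reverse] at hz
    rcases hq₂ z hz with rfl | hz
    · exact (hapex _ hzX).elim
    rw [Walk.support_reverse, List.mem_reverse] at hz
    rcases hq₁ z hz with rfl | hz
    · exact (hapex _ hzX).elim
    rw [Walk.support_toWithApexes, List.mem_map] at hz
    obtain ⟨w, hw, rfl⟩ := hz
    exact ⟨w, hw, hzX⟩

lemma Walk.IsPath.exists_walk_of_withApexes {T₁ T₂ : Set V} {w₁ w₂ : V ⊕ Bool}
    {π : (G.withApexes U).Walk w₁ w₂} (hπ : π.IsPath)
    (hw₁ : w₁ ∈ insert (.inr false) (.inl '' T₁)) (hw₂ : w₂ ∈ insert (.inr true) (.inl '' T₂))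
    (hπ₁ : ∀ z ∈ π.support, z ∈ insert (.inr false) (.inl '' T₁) → z = w₁)
    (hπ₂ : ∀ z ∈ π.support, z ∈ insert (.inr true) (.inl '' T₂) → z = w₂) :
    ∃ u v, ∃ q : G.Walk u v, (∀ z ∈ q.support, .inl z ∈ π.support) ∧
      (w₁ = .inl u ∨ w₁ = .inr false ∧ u ∈ U false) ∧
      (w₂ = .inl v ∨ w₂ = .inr true ∧ v ∈ U true) := by
  have hw₂false : w₂ ≠ .inr false := by rintro rfl; simp at hw₂
  obtain ⟨u, p₁, hp₁, hp₁π, hp₁false, hu⟩ :=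
    hπ.exists_inl_walk hw₁ hw₂false fun h => hπ₁ _ h (Set.mem_insert _ _)
  obtain ⟨v, p₂, -, hp₂p₁, hp₂true, hv⟩ := hp₁.reverse.exists_inl_walk hw₂ (by simp)
    fun h => hπ₂ _ (hp₁π (by simpa using h)) (Set.mem_insert _ _)
  have hp₂apex : ∀ c, .inr c ∉ p₂.support := by
    rintro (_ | _) h
    exacts [hp₁false (by simpa using hp₂p₁ h), hp₂true h]
  obtain ⟨q, hq⟩ := p₂.exists_walk_of_forall_inr_notMem hp₂apex rfl rfl
  exact ⟨u, v, q.reverse, fun z hz => hp₁π (by simpa using hp₂p₁ (hq z (by simpa using hz))),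
    hu, hv⟩

theorem exists_setsLinked_of_withApexes [Finite V] {k : ℕ} {T₁ T₂ : Set V} (hT₁ : T₁.ncard < k)
    (hT₂ : T₂.ncard < k) (h : SetsLinked (G.withApexes U) k (insert (.inr false) (.inl '' T₁))
      (insert (.inr true) (.inl '' T₂))) :
    ∃ s₁ ∈ U false, ∃ s₂ ∈ U true, SetsLinked G k (T₁ ∪ {s₁}) (T₂ ∪ {s₂}) := by
  obtain ⟨a, b, π, ha, hb, hA, hB, hπ, hπA, hπB, hdisj⟩ := h
  choose u v q hq hu hv using fun i =>
    (hπ i).exists_walk_of_withApexes (hA i) (hB i) (hπA i) (hπB i)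
  have hcard {T : Set V} (hT : T.ncard < k) (c : Bool) :
      (insert (.inr c) (.inl '' T) : Set (V ⊕ Bool)).ncard ≤ k := by
    grw [Set.ncard_insert_le, Set.ncard_image_of_injective _ Sum.inl_injective]
    omega
  obtain ⟨i₀, hi₀⟩ : .inr false ∈ Set.range a := by
    rw [range_eq_of_injective_of_ncard_le ha hA (hcard hT₁ false) (Set.toFinite _)]
    exact Set.mem_insert _ _
  obtain ⟨j₀, hj₀⟩ : .inr true ∈ Set.range b := by
    rw [range_eq_of_injective_of_ncard_le hb hB (hcard hT₂ true) (Set.toFinite _)]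
    exact Set.mem_insert _ _
  refine ⟨u i₀, ((hu i₀).resolve_left (by simp [hi₀])).2, v j₀,
    ((hv j₀).resolve_left (by simp [hj₀])).2, SetsLinked.of_walks q (fun i => ?_) (fun i => ?_)
    fun i j hij z hi hj => hdisj i j hij _ (hq i z hi) (hq j z hj)⟩
  · rcases hu i with h | ⟨h, -⟩
    · exact .inl (by simpa [h] using hA i)
    · exact .inr (by rw [ha (h.trans hi₀.symm)]; rfl)
  · rcases hv i with h | ⟨h, -⟩
    · exact .inl (by simpa [h] using hB i)
    · exact .inr (by rw [hb (h.trans hj₀.symm)]; rfl)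

end SimpleGraph

theorem setsLinked_extend_one_general {V : Type*} [Fintype V] (G : SimpleGraph V)
    (k : ℕ) (hk : 1 ≤ k) (S₁ S₂ T₁ T₂ : Set V)
    (hS : SetsLinked G k S₁ S₂)
    (hT₁card : T₁.ncard = k - 1) (hT₂card : T₂.ncard = k - 1)
    (hT : SetsLinked G (k - 1) T₁ T₂) :
    ∃ s₁ ∈ S₁ \ T₁, ∃ s₂ ∈ S₂ \ T₂,
      SetsLinked G k (T₁ ∪ {s₁}) (T₂ ∪ {s₂}) := by
  let U : Bool → Set V := fun c => cond c (S₂ \ T₂) (S₁ \ T₁)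
  have hlinked := SetsLinked.of_forall_separates fun X hX =>
    le_ncard_of_separates_withApexes (U := U) hk subset_rfl subset_rfl hS hT hX
  exact exists_setsLinked_of_withApexes (by omega) (by omega) hlinked

/-- Strengthened Perfect's Theorem for two sets (Theorem 2.2). -/
theorem setsLinked_extend_one {V : Type*} [Fintype V] (G : SimpleGraph V)
    (k : ℕ) (hk : 1 ≤ k) (S₁ S₂ T₁ T₂ : Set V)
    (hdisj : Disjoint S₁ S₂)
    (hS : SetsLinked G k S₁ S₂)
    (hT₁ : T₁ ⊆ S₁) (hT₂ : T₂ ⊆ S₂)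
    (hT₁card : T₁.ncard = k - 1) (hT₂card : T₂.ncard = k - 1)
    (hT : SetsLinked G (k - 1) T₁ T₂) :
    ∃ s₁ ∈ S₁ \ T₁, ∃ s₂ ∈ S₂ \ T₂,
      SetsLinked G k (T₁ ∪ {s₁}) (T₂ ∪ {s₂}) :=
  setsLinked_extend_one_general G k hk S₁ S₂ T₁ T₂ hS hT₁card hT₂card hT
end

section
/- Let G be a graph, S₁ and S₂ two disjoint subsets of V(G) that are k-linked. If each Sᵢ has a subset Tᵢ of size k−t (i = 1,2) such that T₁ and T₂ are (k−t)-linked, then there exist subsets Tᵢ' ⊆ Sᵢ \ Tᵢ of size t (i = 1,2) such that T₁ ∪ T₁' and T₂ ∪ T₂' are k-linked. -/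
/-!
Start from the `k` disjoint `S₁`–`S₂` paths and reroute them until their starts contain `T₁`.
While the start `x` of a `T`-path `Q` is not a start, follow `Q` from `x` to its first vertex on
one of the paths and replace the part of that path before this vertex by the piece of `Q`. If
the replaced start was not in `T₁`, one more vertex of `T₁` is covered; otherwise no vertex of
`T₁` is lost and an edge not on the `T`-paths disappears, so a lexicographic potential drops.
Running the argument again on the reversed paths, from `S₂` back to their current starts, covers
`T₂` while the starts, now ends, stay the same set. Finally the ends of disjoint paths are met by
no other path, so the two endpoint sets are `k`-linked, and `Tᵢ'` are what they add to `Tᵢ`.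
-/

open Function Set

section UpdateRange

variable {ι α : Type*} [DecidableEq ι] {X : Set α} {f : ι → α} {x : α}

theorem Set.ncard_sdiff_range_update_le (hX : X.Finite) (hx : x ∈ X \ range f) (j : ι) :
    (X \ range (update f j x)).ncard ≤ (X \ range f).ncard := by
  have hsub : X \ range (update f j x) ⊆ insert (f j) ((X \ range f) \ {x}) := by
    rintro v ⟨hvX, hv⟩
    refine or_iff_not_imp_left.2 fun hvj => ⟨⟨hvX, ?_⟩, ?_⟩
    · rintro ⟨i, rfl⟩
      exact hv ⟨i, update_of_ne (by rintro rfl; exact hvj rfl) _ _⟩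
    · rintro rfl
      exact hv ⟨j, update_self ..⟩
  calc (X \ range (update f j x)).ncard
      ≤ ((X \ range f) \ {x}).ncard + 1 :=
        (ncard_le_ncard hsub (hX.sdiff.sdiff.insert _)).trans (ncard_insert_le _ _)
    _ = (X \ range f).ncard := ncard_sdiff_singleton_add_one hx hX.sdiff

theorem Set.ncard_sdiff_range_update_lt (hX : X.Finite) (hx : x ∈ X \ range f) {j : ι}
    (hj : f j ∉ X) : (X \ range (update f j x)).ncard < (X \ range f).ncard := by
  refine (ncard_le_ncard ?_ hX.sdiff.sdiff).trans_lt (ncard_sdiff_singleton_lt_of_mem hx hX.sdiff)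
  rintro v ⟨hvX, hv⟩
  refine ⟨⟨hvX, ?_⟩, ?_⟩
  · rintro ⟨i, rfl⟩
    exact hv ⟨i, update_of_ne (by rintro rfl; exact hj hvX) _ _⟩
  · rintro rfl
    exact hv ⟨j, update_self ..⟩

end UpdateRange

namespace SimpleGraph

variable {V : Type*} {G : SimpleGraph V}

namespace Walk

variable {u v w : V}

theorem IsPath.append_of_support_inter {p : G.Walk u v} {q : G.Walk v w} (hp : p.IsPath)
    (hq : q.IsPath) (hpq : ∀ x ∈ p.support, x ∈ q.support → x = v) : (p.append q).IsPath := by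
  rw [isPath_def, support_append]
  refine hp.support_nodup.append hq.support_nodup.tail fun x hx hx' => ?_
  obtain rfl := hpq x hx (List.mem_of_mem_tail hx')
  have := hq.support_nodup
  rw [← q.cons_tail_support] at this
  exact (List.nodup_cons.mp this).1 hx'

theorem exists_takeUntil_first_mem [DecidableEq V] (p : G.Walk u v) {U : Set V}
    (h : ∃ x ∈ p.support, x ∈ U) :
    ∃ y ∈ U, ∃ hy : y ∈ p.support, ∀ x ∈ (p.takeUntil y hy).support, x ∈ U → x = y := by
  induction p with
  | nil =>
    obtain ⟨x, hx, hxU⟩ := h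
    rw [support_nil, List.mem_singleton] at hx
    subst hx
    exact ⟨x, hxU, start_mem_support _, by simp⟩
  | @cons u v' v hadj p ih =>
    by_cases hu : u ∈ U
    · exact ⟨u, hu, start_mem_support _, by simp⟩
    obtain ⟨y, hyU, hy, hfirst⟩ := ih <| by
      obtain ⟨x, hx, hxU⟩ := h
      rw [support_cons, List.mem_cons] at hx
      rcases hx with rfl | hx
      · exact absurd hxU hu
      · exact ⟨x, hx, hxU⟩
    have huy : u ≠ y := by rintro rfl; exact hu hyU
    refine ⟨y, hyU, List.mem_of_mem_tail (by simpa using hy), ?_⟩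
    rw [takeUntil_cons hy huy]
    rintro x hx hxU
    rw [support_cons, List.mem_cons] at hx
    rcases hx with rfl | hx
    · exact absurd hxU hu
    · exact hfirst x hx hxU

end Walk

structure BundledWalk (G : SimpleGraph V) where
  src : V
  dst : V
  walk : G.Walk src dst

namespace BundledWalk

def reverse (p : G.BundledWalk) : G.BundledWalk := ⟨p.dst, p.src, p.walk.reverse⟩

variable {ι : Type*} [DecidableEq ι]

theorem src_comp_update (L : ι → G.BundledWalk) (j : ι) (p : G.BundledWalk) :
    (fun i => (update L j p i).src) = update (fun i => (L i).src) j p.src :=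
  comp_update src L j p

theorem iUnion_edgeSet_update_sdiff_subset (L : ι → G.BundledWalk) {E : Set (Sym2 V)} {j : ι}
    {p : G.BundledWalk} (hp : p.walk.edgeSet ⊆ E ∪ (L j).walk.edgeSet) :
    (⋃ i, (update L j p i).walk.edgeSet) \ E ⊆ (⋃ i, (L i).walk.edgeSet) \ E := by
  rintro e ⟨he, heE⟩
  refine ⟨?_, heE⟩
  obtain ⟨i, hi⟩ := mem_iUnion.1 he
  rcases eq_or_ne i j with rfl | hij
  · rw [update_self] at hi
    exact mem_iUnion.2 ⟨i, (hp hi).resolve_left heE⟩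
  · rw [update_of_ne hij] at hi
    exact mem_iUnion.2 ⟨i, hi⟩

end BundledWalk

variable {ι κ : Type*}

-- Unlike in `SetsLinked`, a path may meet `A` and `B` in further vertices.
structure IsLinkage (G : SimpleGraph V) (A B : Set V) (L : ι → G.BundledWalk) : Prop where
  src_mem : ∀ i, (L i).src ∈ A
  dst_mem : ∀ i, (L i).dst ∈ B
  isPath : ∀ i, (L i).walk.IsPath
  disjoint : Pairwise fun i j => (L i).walk.support.Disjoint (L j).walk.support

theorem _root_.SetsLinked.exists_isLinkage {k : ℕ} {S₁ S₂ : Set V} (h : SetsLinked G k S₁ S₂) :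
    ∃ L : Fin k → G.BundledWalk, IsLinkage G S₁ S₂ L := by
  obtain ⟨a, b, P, -, -, ha, hb, hP, -, -, hdisj⟩ := h
  exact ⟨fun i => ⟨a i, b i, P i⟩, ha, hb, hP, fun i j hij x hi hj => hdisj i j hij x hi hj⟩

-- Lexicographic: a rerouting step either covers a new start of `Q`, or keeps the covered starts
-- and gets rid of an edge off `Q`.
noncomputable def coverPotential (Q : κ → G.BundledWalk) (L : ι → G.BundledWalk) : ℕ ×ₗ ℕ :=
  toLex (((range fun l => (Q l).src) \ range fun i => (L i).src).ncard,
    ((⋃ i, (L i).walk.edgeSet) \ ⋃ l, (Q l).walk.edgeSet).ncard)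

namespace IsLinkage

variable {A B : Set V} {L : ι → G.BundledWalk} {Q : κ → G.BundledWalk}

theorem injective_src (hL : IsLinkage G A B L) : Injective fun i => (L i).src := by
  intro i j hij
  by_contra hne
  have hij : (L i).src = (L j).src := hij
  exact hL.disjoint hne (L i).walk.start_mem_support
    (by rw [hij]; exact (L j).walk.start_mem_support)

theorem injective_dst (hL : IsLinkage G A B L) : Injective fun i => (L i).dst := by
  intro i j hij
  by_contra hne
  have hij : (L i).dst = (L j).dst := hij
  exact hL.disjoint hne (L i).walk.end_mem_support
    (by rw [hij]; exact (L j).walk.end_mem_support)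

theorem reverse (hL : IsLinkage G A B L) : IsLinkage G B A fun i => (L i).reverse where
  src_mem := hL.dst_mem
  dst_mem := hL.src_mem
  isPath i := (hL.isPath i).reverse
  disjoint i j hij x hi hj := by
    simp only [BundledWalk.reverse, Walk.support_reverse, List.mem_reverse] at hi hj
    exact hL.disjoint hij hi hj

theorem mono {A' B' : Set V} (hL : IsLinkage G A B L) (hA : A ⊆ A') (hB : B ⊆ B') :
    IsLinkage G A' B' L :=
  { hL with src_mem := fun i => hA (hL.src_mem i), dst_mem := fun i => hB (hL.dst_mem i) }

theorem update [DecidableEq ι] (hL : IsLinkage G A B L) (j : ι) {p : G.BundledWalk}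
    (hsrc : p.src ∈ A) (hdst : p.dst ∈ B) (hpath : p.walk.IsPath)
    (hdisj : ∀ i ≠ j, p.walk.support.Disjoint (L i).walk.support) :
    IsLinkage G A B (Function.update L j p) where
  src_mem i := by
    rcases eq_or_ne i j with rfl | hi
    · rwa [update_self]
    · rw [update_of_ne hi]; exact hL.src_mem i
  dst_mem i := by
    rcases eq_or_ne i j with rfl | hi
    · rwa [update_self]
    · rw [update_of_ne hi]; exact hL.dst_mem i
  isPath i := by
    rcases eq_or_ne i j with rfl | hi
    · rwa [update_self]
    · rw [update_of_ne hi]; exact hL.isPath i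
  disjoint i i' hii' := by
    rcases eq_or_ne i j with rfl | hi
    · rw [update_self, update_of_ne hii'.symm]; exact hdisj i' hii'.symm
    rcases eq_or_ne i' j with rfl | hi'
    · rw [update_self, update_of_ne hi]; exact (hdisj i hi).symm
    rw [update_of_ne hi, update_of_ne hi']; exact hL.disjoint hii'

theorem disjoint_edgeSet (hL : IsLinkage G A B L) {i j : ι} (hij : i ≠ j) :
    Disjoint (L i).walk.edgeSet (L j).walk.edgeSet := by
  refine Set.disjoint_left.2 fun e hi hj => ?_
  induction e using Sym2.ind with
  | _ a b =>
    exact hL.disjoint hij ((L i).walk.fst_mem_support_of_mem_edges hi)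
      ((L j).walk.fst_mem_support_of_mem_edges hj)

theorem mem_support_of_edgeSet_subset (hL : IsLinkage G A B L) {u y : V} (w : G.Walk u y)
    (hw : w.edgeSet ⊆ ⋃ i, (L i).walk.edgeSet) {i : ι} (hu : u ∈ (L i).walk.support) :
    y ∈ (L i).walk.support := by
  induction w with
  | nil => exact hu
  | @cons a b c hadj w ih =>
    obtain ⟨i', hi'⟩ := mem_iUnion.mp (hw (show s(a, b) ∈ (Walk.cons hadj w).edgeSet by simp))
    obtain rfl : i' = i := by
      by_contra hne
      exact hL.disjoint hne ((L i').walk.fst_mem_support_of_mem_edges hi') hu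
    exact ih (fun e he => hw (by simp [he])) ((L i').walk.snd_mem_support_of_mem_edges hi')

theorem range_src_eq_of_ncard_le (hL : IsLinkage G A B L) (hA : A.ncard ≤ Nat.card ι)
    (hAfin : A.Finite) : range (fun i => (L i).src) = A :=
  eq_of_subset_of_ncard_le (range_subset_iff.2 hL.src_mem)
    (by rwa [ncard_range_of_injective hL.injective_src]) hAfin

theorem range_dst_eq_of_ncard_le (hL : IsLinkage G A B L) (hB : B.ncard ≤ Nat.card ι)
    (hBfin : B.Finite) : range (fun i => (L i).dst) = B :=
  hL.reverse.range_src_eq_of_ncard_le hB hBfin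

theorem setsLinked {k : ℕ} {L : Fin k → G.BundledWalk} (hL : IsLinkage G A B L) :
    SetsLinked G k (range fun i => (L i).src) (range fun i => (L i).dst) := by
  refine ⟨_, _, fun i => (L i).walk, hL.injective_src, hL.injective_dst, fun i => ⟨i, rfl⟩,
    fun i => ⟨i, rfl⟩, hL.isPath, ?_, ?_, fun i j hij x hi hj => hL.disjoint hij hi hj⟩
  · rintro i x hx ⟨i', rfl⟩
    by_contra hne
    exact hL.disjoint (by rintro rfl; exact hne rfl) (L i').walk.start_mem_support hx
  · rintro i x hx ⟨i', rfl⟩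
    by_contra hne
    exact hL.disjoint (by rintro rfl; exact hne rfl) (L i').walk.end_mem_support hx

theorem iUnion_edgeSet_update_sdiff_ssubset [DecidableEq ι] (hL : IsLinkage G A B L)
    {E : Set (Sym2 V)} {j : ι} {p : G.BundledWalk} (hp : p.walk.edgeSet ⊆ E ∪ (L j).walk.edgeSet)
    {e : Sym2 V} (he : e ∈ (L j).walk.edgeSet) (heE : e ∉ E) (hep : e ∉ p.walk.edgeSet) :
    (⋃ i, (Function.update L j p i).walk.edgeSet) \ E ⊂ (⋃ i, (L i).walk.edgeSet) \ E := by
  refine ⟨BundledWalk.iUnion_edgeSet_update_sdiff_subset L hp, fun hsub => ?_⟩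
  obtain ⟨i, hi⟩ := mem_iUnion.1 (hsub ⟨mem_iUnion.2 ⟨j, he⟩, heE⟩).1
  rcases eq_or_ne i j with rfl | hij
  · rw [update_self] at hi
    exact hep hi
  · rw [update_of_ne hij] at hi
    exact (hL.disjoint_edgeSet hij).ne_of_mem hi he rfl

theorem update_append_dropUntil [DecidableEq ι] [DecidableEq V] (hL : IsLinkage G A B L)
    {a y : V} (ha : a ∈ A) {W : G.Walk a y} (hW : W.IsPath) {j : ι}
    (hyj : y ∈ (L j).walk.support)
    (hfirst : ∀ x ∈ W.support, ∀ i, x ∈ (L i).walk.support → x = y) :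
    IsLinkage G A B
      (Function.update L j ⟨a, (L j).dst, W.append ((L j).walk.dropUntil y hyj)⟩) := by
  have hD := (L j).walk.support_dropUntil_subset_support hyj
  have hpath := hW.append_of_support_inter ((hL.isPath j).dropUntil hyj)
    fun x hx hxD => hfirst x hx j (hD hxD)
  refine hL.update j ha (hL.dst_mem j) hpath fun i hij x hx hxi => ?_
  rcases (Walk.mem_support_append_iff _ _).1 hx with hxW | hxD
  · obtain rfl := hfirst x hxW i hxi
    exact hL.disjoint hij hxi hyj
  · exact hL.disjoint hij hxi (hD hxD)

theorem exists_coverPotential_lt_of_forall_disjoint [Finite κ] (hQ : IsLinkage G A B Q)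
    (hL : IsLinkage G A B L) (hcard : Nat.card κ ≤ Nat.card ι) {l : κ}
    (hl : (Q l).src ∉ range fun i => (L i).src)
    (hmiss : ∀ i, (Q l).walk.support.Disjoint (L i).walk.support) :
    ∃ L' : ι → G.BundledWalk, IsLinkage G A B L' ∧ coverPotential Q L' < coverPotential Q L := by
  classical
  obtain ⟨j, hj⟩ : ∃ j, (L j).src ∉ range fun l => (Q l).src := by
    by_contra! h
    have hrange : (range fun i => (L i).src) = range fun l => (Q l).src :=
      eq_of_subset_of_ncard_le (range_subset_iff.2 h)
        (by
          rw [ncard_range_of_injective hL.injective_src, ← Nat.card_coe_set_eq]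
          exact (Finite.card_range_le _).trans hcard)
        (finite_range _)
    exact hl (hrange ▸ ⟨l, rfl⟩)
  refine ⟨_, hL.update j (hQ.src_mem l) (hQ.dst_mem l) (hQ.isPath l) fun i _ => hmiss i,
    Prod.Lex.toLex_lt_toLex.2 (Or.inl ?_)⟩
  rw [BundledWalk.src_comp_update]
  exact ncard_sdiff_range_update_lt (finite_range _) ⟨⟨l, rfl⟩, hl⟩ hj

/-- Splice `Q l`, up to its first vertex `y` on `L`, onto the path of `L` through `y`. If that
path started at a start of `Q`, its part before `y` cannot run along `Q` (it would stay on the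
`Q`-path it starts on), so an edge off `Q` is discarded. -/
theorem exists_coverPotential_lt_of_first_meet [Finite ι] [Finite κ] [DecidableEq V]
    (hQ : IsLinkage G A B Q) (hL : IsLinkage G A B L) {l : κ}
    (hl : (Q l).src ∉ range fun i => (L i).src) {y : V} (hy : y ∈ (Q l).walk.support) {j : ι}
    (hyj : y ∈ (L j).walk.support)
    (hfirst : ∀ x ∈ ((Q l).walk.takeUntil y hy).support, ∀ i, x ∈ (L i).walk.support → x = y) :
    ∃ L' : ι → G.BundledWalk, IsLinkage G A B L' ∧ coverPotential Q L' < coverPotential Q L := by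
  classical
  set E := ⋃ l, (Q l).walk.edgeSet
  set W := (Q l).walk.takeUntil y hy
  set D := (L j).walk.dropUntil y hyj
  have hWE : W.edgeSet ⊆ E := fun e he =>
    mem_iUnion.2 ⟨l, (Q l).walk.edges_takeUntil_subset_edges hy he⟩
  have hpE : (W.append D).edgeSet ⊆ E ∪ (L j).walk.edgeSet := by
    rw [Walk.edgeSet_append]
    exact union_subset_union hWE fun e he => (L j).walk.edges_dropUntil_subset_edges hyj he
  have hx : (Q l).src ∈ (range fun l => (Q l).src) \ range fun i => (L i).src := ⟨⟨l, rfl⟩, hl⟩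
  refine ⟨_, hL.update_append_dropUntil (hQ.src_mem l) ((hQ.isPath l).takeUntil hy) hyj hfirst,
    Prod.Lex.toLex_lt_toLex'.2 ⟨?_, fun heq => ?_⟩⟩
  · dsimp only
    rw [BundledWalk.src_comp_update]
    exact ncard_sdiff_range_update_le (finite_range _) hx j
  have hjX : (L j).src ∈ range fun l => (Q l).src := by
    by_contra hj
    dsimp only at heq
    rw [BundledWalk.src_comp_update] at heq
    exact (ncard_sdiff_range_update_lt (finite_range _) hx hj).ne heq
  obtain ⟨e, heT, heE⟩ : ∃ e ∈ ((L j).walk.takeUntil y hyj).edgeSet, e ∉ E := by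
    by_contra! h
    obtain ⟨l', hl'⟩ := hjX
    have hyl' := hQ.mem_support_of_edgeSet_subset _ h (i := l')
      (hl' ▸ (Q l').walk.start_mem_support : (L j).src ∈ _)
    obtain rfl : l = l' := by_contra fun hne => hQ.disjoint hne hy hyl'
    exact hl ⟨j, hl'.symm⟩
  have heD : e ∉ (W.append D).edgeSet := by
    rw [Walk.edgeSet_append]
    rintro (heW | heD)
    · exact heE (hWE heW)
    · exact (hL.isPath j).isTrail.disjoint_edges_takeUntil_dropUntil hyj heT heD
  exact ncard_lt_ncard (hL.iUnion_edgeSet_update_sdiff_ssubset hpE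
      ((L j).walk.edges_takeUntil_subset_edges hyj heT) heE heD)
    (finite_iUnion fun i => (L i).walk.edges.finite_toSet).sdiff

theorem exists_coverPotential_lt [Finite ι] [Finite κ] (hQ : IsLinkage G A B Q)
    (hL : IsLinkage G A B L) (hcard : Nat.card κ ≤ Nat.card ι)
    (hns : ¬(range fun l => (Q l).src) ⊆ range fun i => (L i).src) :
    ∃ L' : ι → G.BundledWalk, IsLinkage G A B L' ∧ coverPotential Q L' < coverPotential Q L := by
  classical
  obtain ⟨_, ⟨l, rfl⟩, hl⟩ := not_subset.1 hns
  by_cases hmeet : ∃ x ∈ (Q l).walk.support, x ∈ ⋃ i, {v | v ∈ (L i).walk.support}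
  · obtain ⟨y, hyU, hy, hfirst⟩ := (Q l).walk.exists_takeUntil_first_mem hmeet
    obtain ⟨j, hyj⟩ := mem_iUnion.1 hyU
    exact hQ.exists_coverPotential_lt_of_first_meet hL hl hy hyj
      fun x hx i hxi => hfirst x hx (mem_iUnion.2 ⟨i, hxi⟩)
  · push Not at hmeet
    exact hQ.exists_coverPotential_lt_of_forall_disjoint hL hcard hl
      fun i x hx hxi => hmeet x hx (mem_iUnion.2 ⟨i, hxi⟩)

theorem exists_range_src_subset [Finite ι] [Finite κ] (hQ : IsLinkage G A B Q)
    (hL : IsLinkage G A B L) (hcard : Nat.card κ ≤ Nat.card ι) :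
    ∃ L' : ι → G.BundledWalk, IsLinkage G A B L' ∧
      (range fun l => (Q l).src) ⊆ range fun i => (L' i).src := by
  obtain ⟨L', hL', hmin⟩ :=
    (InvImage.wf (coverPotential Q) wellFounded_lt).has_min {L | IsLinkage G A B L} ⟨L, hL⟩
  refine ⟨L', hL', by_contra fun hns => ?_⟩
  obtain ⟨L'', hL'', hlt⟩ := hQ.exists_coverPotential_lt hL' hcard hns
  exact hmin L'' hL'' hlt

-- A form of Perfect's theorem.
theorem exists_range_subset [Finite ι] [Finite κ] (hQ : IsLinkage G A B Q)
    (hL : IsLinkage G A B L) (hcard : Nat.card κ ≤ Nat.card ι) :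
    ∃ L' : ι → G.BundledWalk, IsLinkage G A B L' ∧
      ((range fun l => (Q l).src) ⊆ range fun i => (L' i).src) ∧
      (range fun l => (Q l).dst) ⊆ range fun i => (L' i).dst := by
  obtain ⟨L₁, hL₁, hsrc₁⟩ := hQ.exists_range_src_subset hL hcard
  have hL₁r : IsLinkage G B (range fun i => (L₁ i).src) fun i => (L₁ i).reverse :=
    { hL₁.reverse with dst_mem := fun i => ⟨i, rfl⟩ }
  have hQr : IsLinkage G B (range fun i => (L₁ i).src) fun l => (Q l).reverse :=
    { hQ.reverse with dst_mem := fun l => hsrc₁ ⟨l, rfl⟩ }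
  obtain ⟨L₂, hL₂, hsrc₂⟩ := hQr.exists_range_src_subset hL₁r hcard
  have hdst₂ : (range fun i => (L₂ i).dst) = range fun i => (L₁ i).src :=
    hL₂.range_dst_eq_of_ncard_le (ncard_range_of_injective hL₁.injective_src).le (finite_range _)
  exact ⟨fun i => (L₂ i).reverse, hL₂.reverse.mono (range_subset_iff.2 hL₁.src_mem) subset_rfl,
    hdst₂ ▸ hsrc₁, hsrc₂⟩

end IsLinkage

end SimpleGraph

open SimpleGraph in
theorem setsLinked_extend_general {V : Type*} (G : SimpleGraph V)
    (k t : ℕ) (htk : t < k) (S₁ S₂ T₁ T₂ : Set V)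
    (hS : SetsLinked G k S₁ S₂)
    (hT₁ : T₁ ⊆ S₁) (hT₂ : T₂ ⊆ S₂)
    (hT₁card : T₁.ncard = k - t) (hT₂card : T₂.ncard = k - t)
    (hT : SetsLinked G (k - t) T₁ T₂) :
    ∃ T₁' ⊆ S₁ \ T₁, ∃ T₂' ⊆ S₂ \ T₂,
      T₁'.ncard = t ∧ T₂'.ncard = t ∧
      SetsLinked G k (T₁ ∪ T₁') (T₂ ∪ T₂') := by
  obtain ⟨L, hL⟩ := hS.exists_isLinkage
  obtain ⟨Q, hQ⟩ := hT.exists_isLinkage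
  have hT₁fin : T₁.Finite := finite_of_ncard_pos (by omega)
  have hT₂fin : T₂.Finite := finite_of_ncard_pos (by omega)
  have hsrc : (range fun l => (Q l).src) = T₁ :=
    hQ.range_src_eq_of_ncard_le (by rw [hT₁card, Nat.card_fin]) hT₁fin
  have hdst : (range fun l => (Q l).dst) = T₂ :=
    hQ.range_dst_eq_of_ncard_le (by rw [hT₂card, Nat.card_fin]) hT₂fin
  obtain ⟨L', hL', hT₁L', hT₂L'⟩ :=
    (hQ.mono hT₁ hT₂).exists_range_subset hL (by simp only [Nat.card_fin]; omega)
  rw [hsrc] at hT₁L'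
  rw [hdst] at hT₂L'
  refine ⟨_, sdiff_subset_sdiff_left (range_subset_iff.2 hL'.src_mem), _,
    sdiff_subset_sdiff_left (range_subset_iff.2 hL'.dst_mem), ?_, ?_, ?_⟩
  · rw [ncard_sdiff hT₁L' hT₁fin, ncard_range_of_injective hL'.injective_src, hT₁card,
      Nat.card_fin]
    omega
  · rw [ncard_sdiff hT₂L' hT₂fin, ncard_range_of_injective hL'.injective_dst, hT₂card,
      Nat.card_fin]
    omega
  · rw [union_sdiff_cancel hT₁L', union_sdiff_cancel hT₂L']
    exact hL'.setsLinked

/-- Self-refining version of the strengthened Perfect's Theorem (Theorem 2.3). -/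
theorem setsLinked_extend {V : Type*} [Fintype V] (G : SimpleGraph V)
    (k t : ℕ) (ht : 0 < t) (htk : t < k) (S₁ S₂ T₁ T₂ : Set V)
    (hdisj : Disjoint S₁ S₂)
    (hS : SetsLinked G k S₁ S₂)
    (hT₁ : T₁ ⊆ S₁) (hT₂ : T₂ ⊆ S₂)
    (hT₁card : T₁.ncard = k - t) (hT₂card : T₂.ncard = k - t)
    (hT : SetsLinked G (k - t) T₁ T₂) :
    ∃ T₁' ⊆ S₁ \ T₁, ∃ T₂' ⊆ S₂ \ T₂,
      T₁'.ncard = t ∧ T₂'.ncard = t ∧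
      SetsLinked G k (T₁ ∪ T₁') (T₂ ∪ T₂') :=
  setsLinked_extend_general G k t htk S₁ S₂ T₁ T₂ hS hT₁ hT₂ hT₁card hT₂card hT
end

section
/- Let G be a 3-connected claw-free graph and T a 3-element vertex cut of G. Then each of the (exactly two) connected components of G − T is 2-connected or has at most 2 vertices; in particular, no component of G − T contains a cutvertex. -/
/-!
Call a vertex `x` of a separator `X` attached to a vertex set `P` if `x` has a neighbour in `P`.
If no edge leaves `P` outside `X` and both `P` and its complement meet `G - X`, then the attached
vertices of `X` already separate, so by 3-connectivity there are at least three of them. Hence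
every vertex `t` of the 3-cut `T` has a neighbour in every component of `G - T`, and a third
component would give a claw at `t`. If `v` were a cutvertex of a component `Q`, the separator
`{v} ∪ T` shows that each of two components of `Q - v` is attached to two vertices of `T`; so some
`t ∈ T` is attached to both, and with its neighbour in the other component of `G - T` it is
the centre of a claw.
-/

def ClawFree {V : Type*} (G : SimpleGraph V) : Prop :=
  ∀ v a b c : V, G.Adj v a → G.Adj v b → G.Adj v c → a ≠ b → a ≠ c → b ≠ c →
    G.Adj a b ∨ G.Adj a c ∨ G.Adj b c

def ThreeConnected {V : Type*} [Fintype V] (G : SimpleGraph V) : Prop :=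
  4 ≤ Fintype.card V ∧
    ∀ X : Finset V, X.card ≤ 2 → (G.induce ((↑X : Set V)ᶜ)).Connected

/-- `Q` is the vertex set of a connected component of the subgraph of `G` induced on `R`. -/
def IsComponentSet {V : Type*} (G : SimpleGraph V) (R Q : Set V) : Prop :=
  Q ⊆ R ∧ Q.Nonempty ∧ (G.induce Q).Connected ∧
    ∀ Q' : Set V, Q ⊆ Q' → Q' ⊆ R → (G.induce Q').Connected → Q' = Q

open SimpleGraph Finset

section

variable {V : Type*} {G : SimpleGraph V}

def NeighborClosed (G : SimpleGraph V) (S P : Set V) : Prop :=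
  ∀ p ∈ P, ∀ w ∈ S, G.Adj p w → w ∈ P

namespace NeighborClosed

variable {S P Q : Set V}

lemma compl_adj (hP : NeighborClosed G S P) {a b : V} (ha : a ∈ P) (hb : b ∈ S) (hbP : b ∉ P) :
    Gᶜ.Adj a b :=
  (SimpleGraph.compl_adj G a b).2 ⟨ne_of_mem_of_not_mem ha hbP, fun h => hbP (hP a ha b hb h)⟩

lemma diff (hP : NeighborClosed G S P) : NeighborClosed G S (S \ P) :=
  fun p hp w hw hadj => ⟨hw, fun hwP => hp.2 (hP w hwP p hp.1 hadj.symm)⟩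

lemma diff_singleton {v : V} (hQ : NeighborClosed G S Q) (hP : NeighborClosed G (Q \ {v}) P)
    (hPQ : P ⊆ Q) : NeighborClosed G (S \ {v}) P :=
  fun p hp w hw hadj => hP p hp w ⟨hQ p (hPQ hp) w hw.1 hadj, hw.2⟩ hadj

lemma image_reachable (y : S) :
    NeighborClosed G S (Subtype.val '' {x | (G.induce S).Reachable y x}) := by
  rintro _ ⟨x, hx, rfl⟩ w hw hadj
  exact ⟨⟨w, hw⟩, hx.trans (Adj.reachable (by simpa using hadj)), rfl⟩

end NeighborClosed

lemma compl_adj_of_not_reachable_induce {S : Set V} {x y : S}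
    (h : ¬(G.induce S).Reachable x y) : Gᶜ.Adj x y :=
  (SimpleGraph.compl_adj G x y).2 ⟨fun hxy => h (Subtype.ext hxy ▸ Reachable.refl x),
    fun hadj => h (Adj.reachable (by simpa using hadj))⟩

lemma IsComponentSet.neighborClosed {R Q : Set V} (hQ : IsComponentSet G R Q) :
    NeighborClosed G R Q := by
  intro p hp w hw hadj
  have hconn : (G.induce (Q ∪ {w})).Connected :=
    connected_induce_union hQ.2.2.1.preconnected Preconnected.of_subsingleton hp rfl hadj
  have := hQ.2.2.2 (Q ∪ {w}) Set.subset_union_left (Set.union_subset hQ.1 (by simpa)) hconn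
  exact this ▸ Set.mem_union_right Q rfl

lemma ClawFree.not_compl_adj (hcf : ClawFree G) {t a b c : V} (ha : G.Adj t a) (hb : G.Adj t b)
    (hc : G.Adj t c) (hab : Gᶜ.Adj a b) (hac : Gᶜ.Adj a c) : ¬Gᶜ.Adj b c := by
  rw [compl_adj] at hab hac ⊢
  rintro ⟨hbc, hnbc⟩
  rcases hcf t a b c ha hb hc hab.1 hac.1 hbc with h | h | h
  exacts [hab.2 h, hac.2 h, hnbc h]

namespace ThreeConnected

variable [Fintype V] (hG : ThreeConnected G)
include hG

open Classical in
theorem three_le_card_filter_adj {X : Finset V} {P : Set V} (hP : NeighborClosed G (↑X)ᶜ P)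
    {a b : V} (ha : a ∈ P) (haX : a ∉ X) (hb : b ∉ P) (hbX : b ∉ X) :
    3 ≤ #(X.filter fun x => ∃ p ∈ P, G.Adj x p) := by
  set N := X.filter fun x => ∃ p ∈ P, G.Adj x p
  have hNX : N ⊆ X := filter_subset _ _
  by_contra! hN
  obtain ⟨w⟩ := (hG.2 N (by omega)).preconnected
    ⟨a, fun h => haX (hNX h)⟩ ⟨b, fun h => hbX (hNX h)⟩
  obtain ⟨d, -, hd₁, hd₂⟩ := w.exists_boundary_dart {x | x.1 ∈ P} ha hb
  have hadj : G.Adj d.fst d.snd := by simpa using d.adj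
  have hsndX : ↑d.snd ∈ X := by
    by_contra h
    exact hd₂ (hP _ hd₁ _ h hadj)
  exact d.snd.2 (mem_filter.2 ⟨hsndX, _, hd₁, hadj.symm⟩)

theorem exists_adj_of_neighborClosed {T : Finset V} (hT : #T ≤ 3) {P : Set V}
    (hP : NeighborClosed G (↑T)ᶜ P) {a b : V} (ha : a ∈ P) (haT : a ∉ T) (hb : b ∉ P)
    (hbT : b ∉ T) {t : V} (ht : t ∈ T) : ∃ p ∈ P, G.Adj t p := by
  classical
  have hall := eq_of_subset_of_card_le (filter_subset _ T)
    (hT.trans (hG.three_le_card_filter_adj hP ha haT hb hbT))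
  rw [← hall] at ht
  exact (mem_filter.1 ht).2

open Classical in
theorem two_le_card_filter_adj {T : Finset V} {v : V} {P : Set V}
    (hP : NeighborClosed G ((↑T)ᶜ \ {v}) P) {a b : V} (ha : a ∈ P) (haT : a ∉ T) (hav : a ≠ v)
    (hb : b ∉ P) (hbT : b ∉ T) (hbv : b ≠ v) :
    2 ≤ #(T.filter fun t => ∃ p ∈ P, G.Adj t p) := by
  have hP' : NeighborClosed G (↑(insert v T))ᶜ P := by
    convert hP using 1
    ext
    simp [and_comm]
  have h3 := hG.three_le_card_filter_adj hP' ha (by simp [haT, hav]) hb (by simp [hbT, hbv])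
  rw [filter_insert] at h3
  split_ifs at h3
  · exact Nat.le_of_lt_succ ((card_insert_le _ _).trans_lt' h3)
  · omega

theorem exists_adj_reachable {T : Finset V} (hT : #T ≤ 3) {t : V} (ht : t ∈ T)
    {x y : ↥(↑T : Set V)ᶜ} (hxy : ¬(G.induce (↑T)ᶜ).Reachable x y) :
    ∃ a : ↥(↑T : Set V)ᶜ, (G.induce (↑T)ᶜ).Reachable x a ∧ G.Adj t a := by
  obtain ⟨_, ⟨a, hxa, rfl⟩, hta⟩ := hG.exists_adj_of_neighborClosed hT
    (NeighborClosed.image_reachable x) ⟨x, Reachable.refl x, rfl⟩ x.2 (b := y)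
    (fun ⟨b, hxb, hby⟩ => hxy (Subtype.ext hby ▸ hxb)) y.2 ht
  exact ⟨a, hxa, hta⟩

theorem card_connectedComponent_induce_compl_eq_two (hcf : ClawFree G) {T : Finset V}
    (hT : #T ≤ 3) (hcut : ¬(G.induce (↑T : Set V)ᶜ).Connected) :
    Nat.card (G.induce (↑T : Set V)ᶜ).ConnectedComponent = 2 := by
  have hR : Nonempty ↥(↑T : Set V)ᶜ := by
    obtain ⟨v, -, hv⟩ := exists_mem_notMem_of_card_lt_card (s := T) (t := univ)
      (by rw [card_univ]; linarith [hG.1])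
    exact ⟨⟨v, hv⟩⟩
  obtain ⟨t, ht⟩ : T.Nonempty := by
    rw [← card_pos]
    by_contra h
    exact hcut (hG.2 T (by omega))
  obtain ⟨x, y, hxy⟩ : ∃ x y, ¬(G.induce (↑T : Set V)ᶜ).Reachable x y := by
    by_contra! h
    exact hcut ((connected_iff _).2 ⟨h, hR⟩)
  rw [Nat.card_eq_two_iff]
  refine ⟨_, _, fun h => hxy (ConnectedComponent.exact h), Set.eq_univ_of_forall fun c => ?_⟩
  induction c using ConnectedComponent.ind with | h u => ?_
  by_contra hu
  simp only [Set.mem_insert_iff, Set.mem_singleton_iff, not_or, ConnectedComponent.eq] at hu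
  obtain ⟨hux, huy⟩ := hu
  obtain ⟨a, hua, hta⟩ := hG.exists_adj_reachable hT ht hux
  obtain ⟨b, hxb, htb⟩ := hG.exists_adj_reachable hT ht (mt Reachable.symm hux)
  obtain ⟨c, hyc, htc⟩ := hG.exists_adj_reachable hT ht (mt Reachable.symm huy)
  refine hcf.not_compl_adj hta htb htc ?_ ?_ ?_ <;> apply compl_adj_of_not_reachable_induce
  · exact fun hab => hux (hua.trans (hab.trans hxb.symm))
  · exact fun hac => huy (hua.trans (hac.trans hyc.symm))
  · exact fun hbc => hxy (hxb.trans (hbc.trans hyc.symm))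

theorem connected_induce_diff_singleton (hcf : ClawFree G) {T : Finset V} (hT : #T ≤ 3)
    {Q : Set V} (hQT : Q ⊆ (↑T)ᶜ) (hQ : NeighborClosed G (↑T)ᶜ Q) {q : V} (hqT : q ∉ T)
    (hqQ : q ∉ Q) {v : V} (hv : v ∈ Q) (hne : (Q \ {v}).Nonempty) :
    (G.induce (Q \ {v})).Connected := by
  classical
  refine (connected_iff _).2 ⟨fun y z => ?_, hne.to_subtype⟩
  by_contra hyz
  let side (x : ↥(Q \ {v})) : Set V := Subtype.val '' {w | (G.induce (Q \ {v})).Reachable x w}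
  have hside (x) : side x ⊆ Q \ {v} := by
    rintro _ ⟨w, -, rfl⟩
    exact w.2
  have hattached (x) : 2 ≤ #(T.filter fun t => ∃ p ∈ side x, G.Adj t p) :=
    hG.two_le_card_filter_adj
      (hQ.diff_singleton (NeighborClosed.image_reachable x) fun _ h => (hside x h).1)
      ⟨x, Reachable.refl x, rfl⟩ (fun h => hQT x.2.1 h) x.2.2 (fun h => hqQ (hside x h).1) hqT
      (ne_of_mem_of_not_mem hv hqQ).symm
  obtain ⟨t, ht⟩ := inter_nonempty_of_card_lt_card_add_card
    (filter_subset (fun t => ∃ p ∈ side y, G.Adj t p) T)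
    (filter_subset (fun t => ∃ p ∈ side z, G.Adj t p) T) (by linarith [hattached y, hattached z])
  obtain ⟨⟨htT, _, ⟨a, hya, rfl⟩, hta⟩, ⟨-, _, ⟨b, hzb, rfl⟩, htb⟩⟩ := by
    simpa only [mem_inter, mem_filter] using ht
  obtain ⟨c, ⟨hcT, hcQ⟩, htc⟩ := hG.exists_adj_of_neighborClosed hT hQ.diff ⟨hqT, hqQ⟩ hqT
    (b := y) (fun h => h.2 y.2.1) (hQT y.2.1) htT
  exact hcf.not_compl_adj hta htb htc
    (compl_adj_of_not_reachable_induce fun hab => hyz (hya.trans (hab.trans hzb.symm)))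
    (hQ.compl_adj a.2.1 hcT hcQ) (hQ.compl_adj b.2.1 hcT hcQ)

end ThreeConnected

end

theorem components_of_three_cut_no_cutvertex_general {V : Type*} [Fintype V]
    (G : SimpleGraph V) (hG3 : ThreeConnected G) (hcf : ClawFree G)
    (T : Finset V) (hT : T.card = 3)
    (hcut : ¬ (G.induce ((↑T : Set V)ᶜ)).Connected) :
    Nat.card (G.induce ((↑T : Set V)ᶜ)).ConnectedComponent = 2 ∧
    (∀ Q : Set V, IsComponentSet G ((↑T : Set V)ᶜ) Q →
      (Q.ncard ≤ 2 ∨ (3 ≤ Q.ncard ∧ ∀ v ∈ Q, (G.induce (Q \ {v})).Connected)) ∧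
      (∀ v ∈ Q, (Q \ {v}).Nonempty → (G.induce (Q \ {v})).Connected)) := by
  have hno_cutvertex : ∀ Q, IsComponentSet G (↑T)ᶜ Q →
      ∀ v ∈ Q, (Q \ {v}).Nonempty → (G.induce (Q \ {v})).Connected := by
    intro Q hQ v hv hne
    have hQT : Q ≠ (↑T)ᶜ := fun h => hcut (h ▸ hQ.2.2.1)
    obtain ⟨q, hqT, hqQ⟩ := Set.exists_of_ssubset (hQ.1.ssubset_of_ne hQT)
    exact hG3.connected_induce_diff_singleton hcf hT.le hQ.1 hQ.neighborClosed hqT hqQ hv hne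
  refine ⟨hG3.card_connectedComponent_induce_compl_eq_two hcf hT.le hcut,
    fun Q hQ => ⟨?_, hno_cutvertex Q hQ⟩⟩
  rcases le_or_gt Q.ncard 2 with hQ2 | hQ3
  · exact Or.inl hQ2
  · refine Or.inr ⟨hQ3, fun v hv => hno_cutvertex Q hQ v hv ?_⟩
    obtain ⟨b, hb, hbv⟩ := Set.exists_ne_of_one_lt_ncard (s := Q) (by omega) v
    exact ⟨b, hb, hbv⟩

/-- Lemma 3.2, second part: if `T` is a 3-cut of a 3-connected claw-free graph
`G`, then `G - T` has exactly two components, and each component is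
2-connected or has at most 2 vertices; in particular, no component of `G - T`
contains a cutvertex. -/
theorem components_of_three_cut_no_cutvertex {V : Type*} [Fintype V] [DecidableEq V]
    (G : SimpleGraph V) (hG3 : ThreeConnected G) (hcf : ClawFree G)
    (T : Finset V) (hT : T.card = 3)
    (hcut : ¬ (G.induce ((↑T : Set V)ᶜ)).Connected) :
    Nat.card (G.induce ((↑T : Set V)ᶜ)).ConnectedComponent = 2 ∧
    (∀ Q : Set V, IsComponentSet G ((↑T : Set V)ᶜ) Q →
      (Q.ncard ≤ 2 ∨ (3 ≤ Q.ncard ∧ ∀ v ∈ Q, (G.induce (Q \ {v})).Connected)) ∧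
      (∀ v ∈ Q, (Q \ {v}).Nonempty → (G.induce (Q \ {v})).Connected)) :=
  components_of_three_cut_no_cutvertex_general G hG3 hcf T hT hcut
end

section
/- Let G be a 3-connected claw-free graph, T a 3-element vertex cut, and v ∈ T. Then v has a neighbor in each of the two connected components of G − T, and the neighbors of v inside each single component of G − T form a clique. -/
/-! Each of the two sides `Q` and `Tᶜ \ Q` of the cut is closed under adjacency inside `Tᶜ`.
Since `G - (T \ {v})` is connected, a path in it from one side to the other must leave that
side through `v`, so `v` has a neighbour on both sides. Given two distinct neighbours `a, b`
of `v` in `Q` and a neighbour `c` outside `Q`, `c` is adjacent to neither, so claw-freeness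
at `v` forces `a ~ b`. -/

namespace SimpleGraph

variable {V : Type*} {G : SimpleGraph V}

lemma Reachable.mem_of_induce_of_adj_closed {s A : Set V}
    (hA : ∀ a ∈ A, ∀ b ∈ s, G.Adj a b → b ∈ A) {x y : s}
    (hxy : (G.induce s).Reachable x y) (hx : (x : V) ∈ A) : (y : V) ∈ A := by
  obtain ⟨p⟩ := hxy
  induction p with
  | nil => exact hx
  | @cons _ u _ hadj _ ih => exact ih (hA _ hx _ u.2 hadj)

lemma exists_adj_of_connected_induce_insert {R A : Set V} {v a y : V}
    (hconn : (G.induce (insert v R)).Connected) (hAR : A ⊆ R)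
    (hA : ∀ a ∈ A, ∀ b ∈ R, G.Adj a b → b ∈ A)
    (ha : a ∈ A) (hy : y ∈ R) (hyA : y ∉ A) : ∃ w ∈ A, G.Adj v w := by
  by_contra! hnone
  have hA' : ∀ a ∈ A, ∀ b ∈ insert v R, G.Adj a b → b ∈ A := by
    rintro a ha b (rfl | hb) hab
    · exact absurd hab.symm (hnone a ha)
    · exact hA a ha b hb hab
  exact hyA <| (hconn.preconnected ⟨a, .inr (hAR ha)⟩ ⟨y, .inr hy⟩).mem_of_induce_of_adj_closed
    hA' ha

end SimpleGraph

open SimpleGraph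

section

variable {V : Type*} {G : SimpleGraph V}

namespace IsComponentSet

variable {R Q : Set V}

lemma mem_of_adj (hQ : IsComponentSet G R Q) {q x : V} (hq : q ∈ Q) (hx : x ∈ R)
    (hqx : G.Adj q x) : x ∈ Q := by
  have hconn : (G.induce (Q ∪ {x})).Connected :=
    connected_induce_union hQ.2.2.1.preconnected Preconnected.of_subsingleton hq rfl hqx
  rw [← hQ.2.2.2 _ Set.subset_union_left (Set.union_subset hQ.1 (by simpa using hx)) hconn]
  exact .inr rfl

lemma exists_mem_not_mem (hQ : IsComponentSet G R Q) (hR : ¬ (G.induce R).Connected) :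
    ∃ y ∈ R, y ∉ Q := by
  by_contra! h
  exact hR (Set.Subset.antisymm hQ.1 h ▸ hQ.2.2.1)

lemma mem_diff_of_adj (hQ : IsComponentSet G R Q) {a b : V} (ha : a ∈ R \ Q) (hb : b ∈ R)
    (hab : G.Adj a b) : b ∈ R \ Q :=
  ⟨hb, fun hbQ => ha.2 (hQ.mem_of_adj hbQ ha.1 hab.symm)⟩

end IsComponentSet

lemma ClawFree.adj_of_not_adj_third (hG : ClawFree G) {v a b c : V}
    (hva : G.Adj v a) (hvb : G.Adj v b) (hvc : G.Adj v c) (hab : a ≠ b)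
    (hca : c ≠ a) (hcb : c ≠ b) (hac : ¬ G.Adj a c) (hbc : ¬ G.Adj b c) : G.Adj a b := by
  rcases hG v a b c hva hvb hvc hab hca.symm hcb.symm with h | h | h
  exacts [h, absurd h hac, absurd h hbc]

lemma ThreeConnected.connected_induce_insert_compl [Fintype V] (hG : ThreeConnected G)
    {T : Finset V} (hT : T.card ≤ 3) {v : V} (hv : v ∈ T) :
    (G.induce (insert v (↑T : Set V)ᶜ)).Connected := by
  classical
  have hset : insert v (↑T : Set V)ᶜ = (↑(T.erase v) : Set V)ᶜ := by
    ext x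
    by_cases hxv : x = v <;> simp [hxv, hv]
  rw [hset]
  exact hG.2 _ (by rw [Finset.card_erase_of_mem hv]; omega)

end

theorem cut_vertex_neighbors_in_components_general {V : Type*} [Fintype V]
    (G : SimpleGraph V) (hG3 : ThreeConnected G) (hcf : ClawFree G)
    (T : Finset V) (hT : T.card = 3)
    (hcut : ¬ (G.induce ((↑T : Set V)ᶜ)).Connected)
    (v : V) (hv : v ∈ T) :
    ∀ Q : Set V, IsComponentSet G ((↑T : Set V)ᶜ) Q →
      (∃ w ∈ Q, G.Adj v w) ∧
      (∀ a ∈ Q, ∀ b ∈ Q, G.Adj v a → G.Adj v b → a ≠ b → G.Adj a b) := by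
  intro Q hQ
  have hconn := hG3.connected_induce_insert_compl hT.le hv
  obtain ⟨q, hq⟩ := hQ.2.1
  obtain ⟨y, hyR, hyQ⟩ := hQ.exists_mem_not_mem hcut
  refine ⟨exists_adj_of_connected_induce_insert hconn hQ.1
    (fun _ ha _ hb => hQ.mem_of_adj ha hb) hq hyR hyQ, ?_⟩
  obtain ⟨c, ⟨hcR, hcQ⟩, hvc⟩ := exists_adj_of_connected_induce_insert hconn Set.sdiff_subset
    (fun _ ha _ hb => hQ.mem_diff_of_adj ha hb) ⟨hyR, hyQ⟩ (hQ.1 hq) (fun h => h.2 hq)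
  intro a ha b hb hva hvb hab
  exact hcf.adj_of_not_adj_third hva hvb hvc hab (by rintro rfl; exact hcQ ha)
    (by rintro rfl; exact hcQ hb) (fun h => hcQ (hQ.mem_of_adj ha hcR h))
    (fun h => hcQ (hQ.mem_of_adj hb hcR h))

/-- If `T` is a 3-cut of a 3-connected claw-free graph `G` and `v ∈ T`, then
`v` has a neighbor in each connected component of `G - T`, and the neighbors
of `v` inside any single component form a clique. -/
theorem cut_vertex_neighbors_in_components {V : Type*} [Fintype V] [DecidableEq V]
    (G : SimpleGraph V) (hG3 : ThreeConnected G) (hcf : ClawFree G)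
    (T : Finset V) (hT : T.card = 3)
    (hcut : ¬ (G.induce ((↑T : Set V)ᶜ)).Connected)
    (v : V) (hv : v ∈ T) :
    ∀ Q : Set V, IsComponentSet G ((↑T : Set V)ᶜ) Q →
      (∃ w ∈ Q, G.Adj v w) ∧
      (∀ a ∈ Q, ∀ b ∈ Q, G.Adj v a → G.Adj v b → a ≠ b → G.Adj a b) :=
  cut_vertex_neighbors_in_components_general G hG3 hcf T hT hcut v hv
end

section
/- The complete bipartite graph K_{3,3} is 3-connected but does not satisfy property C(3,1): there is no cycle containing all three vertices of one side of the bipartition while avoiding some vertex of the other side. -/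
/-- `G` has a cycle whose vertex set contains `S` and avoids every vertex of `A`. -/
def CycleThrough {V : Type*} (G : SimpleGraph V) (S A : Set V) : Prop :=
  ∃ (u : V) (c : G.Walk u u), c.IsCycle ∧
    (∀ x ∈ S, x ∈ c.support) ∧ (∀ x ∈ A, x ∉ c.support)

/-- Property `C(m, n)`: for any disjoint vertex sets `S₁`, `S₂` with
`|S₁| = m`, `|S₂| = n`, there is a cycle containing all of `S₁` and no
vertex of `S₂`. -/
def PropC {V : Type*} [DecidableEq V] (G : SimpleGraph V) (m n : ℕ) : Prop :=
  ∀ S₁ S₂ : Finset V, Disjoint S₁ S₂ → S₁.card = m → S₂.card = n →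
    ∃ (u : V) (c : G.Walk u u), c.IsCycle ∧
      (∀ x ∈ S₁, x ∈ c.support) ∧ (∀ x ∈ S₂, x ∉ c.support)

open SimpleGraph

theorem List.card_le_length_of_forall_mem {γ : Type*} [Fintype γ] {l : List γ}
    (h : ∀ x, x ∈ l) : Fintype.card γ ≤ l.length := by
  classical
  calc Fintype.card γ = Finset.univ.card := Finset.card_univ.symm
    _ ≤ l.toFinset.card := Finset.card_le_card fun x _ ↦ List.mem_toFinset.2 (h x)
    _ ≤ l.length := l.toFinset_card_le

theorem List.Nodup.length_lt_card_of_notMem {γ : Type*} [Fintype γ] {l : List γ} (h : l.Nodup)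
    {x : γ} (hx : x ∉ l) : l.length < Fintype.card γ := by
  classical
  rw [← List.toFinset_card_of_nodup h]
  exact Finset.card_lt_univ_of_notMem (by simpa using hx)

theorem Finset.exists_apply_notMem_of_card_lt {γ δ : Type*} [Fintype γ] (f : γ ↪ δ)
    {X : Finset δ} (hX : X.card < Fintype.card γ) : ∃ c, f c ∉ X := by
  obtain ⟨_, he, heX⟩ :=
    Finset.exists_mem_notMem_of_card_lt_card (t := Finset.univ.map f) (by simpa using hX)
  obtain ⟨c, -, rfl⟩ := Finset.mem_map.1 he
  exact ⟨c, heX⟩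

namespace completeBipartiteGraph

variable {α β : Type*}

theorem walk_lefts_add_eq_rights_add {u v : α ⊕ β}
    (p : (completeBipartiteGraph α β).Walk u v) :
    (p.support.filterMap Sum.getLeft?).length + v.isRight.toNat =
      (p.support.filterMap Sum.getRight?).length + u.isLeft.toNat := by
  induction p with
  | @nil x => rcases x with x | x <;> simp
  | @cons x y z h p ih =>
    rw [Walk.support_cons]
    rcases x with x | x <;> rcases y with y | y <;>
      simp [List.filterMap_cons] at h ih ⊢ <;> omega

theorem closedWalk_tail_lefts_eq_rights {u : α ⊕ β}
    (c : (completeBipartiteGraph α β).Walk u u) :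
    (c.support.tail.filterMap Sum.getLeft?).length =
      (c.support.tail.filterMap Sum.getRight?).length := by
  have h := walk_lefts_add_eq_rights_add c
  rw [← c.cons_tail_support] at h
  rcases u with x | x <;> simpa [-Walk.cons_tail_support, List.filterMap_cons] using h

theorem inr_mem_support_of_isCycle [Fintype α] [Fintype β]
    (hαβ : Fintype.card β ≤ Fintype.card α) {u : α ⊕ β}
    {c : (completeBipartiteGraph α β).Walk u u} (hc : c.IsCycle)
    (hleft : ∀ a, Sum.inl a ∈ c.support) (b : β) : Sum.inr b ∈ c.support := by
  by_contra hb
  have mem_tail : ∀ x ∈ c.support, x ∈ c.support.tail := by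
    intro x hx
    rw [← c.cons_tail_support, List.mem_cons] at hx
    rcases hx with rfl | hx
    exacts [Walk.end_mem_tail_support hc.not_nil, hx]
  have hlefts : Fintype.card α ≤ (c.support.tail.filterMap Sum.getLeft?).length :=
    List.card_le_length_of_forall_mem fun a ↦
      List.mem_filterMap.2 ⟨_, mem_tail _ (hleft a), rfl⟩
  have hrights : (c.support.tail.filterMap Sum.getRight?).length < Fintype.card β := by
    refine (hc.support_nodup.filterMap ?_).length_lt_card_of_notMem (x := b) ?_
    · rintro (x | x) (y | y) z <;> simp_all
    · simp only [List.mem_filterMap, Sum.getRight?_eq_some_iff]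
      rintro ⟨_, hx, rfl⟩
      exact hb (List.mem_of_mem_tail hx)
  have := closedWalk_tail_lefts_eq_rights c
  omega

theorem not_cycleThrough [Fintype α] [Fintype β] (hαβ : Fintype.card β ≤ Fintype.card α)
    {S A : Set (α ⊕ β)} (hS : ∀ a, Sum.inl a ∈ S) {b : β} (hb : Sum.inr b ∈ A) :
    ¬ CycleThrough (completeBipartiteGraph α β) S A := by
  rintro ⟨u, c, hc, hcS, hcA⟩
  exact hcA _ hb (inr_mem_support_of_isCycle hαβ hc (fun a ↦ hcS _ (hS a)) b)

theorem not_propC [Fintype α] [Fintype β] [Nonempty β] [DecidableEq (α ⊕ β)]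
    (hαβ : Fintype.card β ≤ Fintype.card α) :
    ¬ PropC (completeBipartiteGraph α β) (Fintype.card α) 1 := by
  intro hC
  obtain ⟨b⟩ := ‹Nonempty β›
  exact not_cycleThrough hαβ (S := (Finset.univ.map .inl : Finset (α ⊕ β)))
    (A := ({Sum.inr b} : Finset (α ⊕ β))) (b := b) (by simp) (by simp)
    (hC _ _ (by simp [Finset.disjoint_singleton_right]) (by simp) rfl)

theorem induce_connected {s : Set (α ⊕ β)} (ha : ∃ a, Sum.inl a ∈ s)
    (hb : ∃ b, Sum.inr b ∈ s) : ((completeBipartiteGraph α β).induce s).Connected := by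
  obtain ⟨a₀, ha₀⟩ := ha
  obtain ⟨b₀, hb₀⟩ := hb
  have adj : ∀ a b (ha : Sum.inl a ∈ s) (hb : Sum.inr b ∈ s),
      ((completeBipartiteGraph α β).induce s).Adj ⟨_, ha⟩ ⟨_, hb⟩ := by
    simp
  refine (connected_iff_exists_forall_reachable _).2 ⟨⟨_, ha₀⟩, ?_⟩
  rintro ⟨a | b, hx⟩
  · exact (adj a₀ b₀ ha₀ hb₀).reachable.trans (adj a b₀ hx hb₀).symm.reachable
  · exact (adj a₀ b ha₀ hx).reachable

theorem threeConnected [Fintype α] [Fintype β] (hα : 3 ≤ Fintype.card α)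
    (hβ : 3 ≤ Fintype.card β) : ThreeConnected (completeBipartiteGraph α β) := by
  refine ⟨by rw [Fintype.card_sum]; omega, fun X hX ↦ induce_connected ?_ ?_⟩
  · exact Finset.exists_apply_notMem_of_card_lt .inl (by omega)
  · exact Finset.exists_apply_notMem_of_card_lt .inr (by omega)

end completeBipartiteGraph

/-- `K_{3,3}` is 3-connected but does not satisfy `C(3,1)`: no cycle contains
all three vertices of one side while avoiding some vertex of the other side. -/
theorem K33_not_C31 :
    ThreeConnected (completeBipartiteGraph (Fin 3) (Fin 3)) ∧
    (∃ z : Fin 3, ¬ CycleThrough (completeBipartiteGraph (Fin 3) (Fin 3))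
        {Sum.inl 0, Sum.inl 1, Sum.inl 2} {Sum.inr z}) ∧
    ¬ PropC (completeBipartiteGraph (Fin 3) (Fin 3)) 3 1 := by
  have hcard : Fintype.card (Fin 3) = 3 := Fintype.card_fin 3
  refine ⟨completeBipartiteGraph.threeConnected hcard.ge hcard.ge, ⟨0, ?_⟩, ?_⟩
  · exact completeBipartiteGraph.not_cycleThrough le_rfl (fun a ↦ by fin_cases a <;> simp) rfl
  · simpa using completeBipartiteGraph.not_propC (α := Fin 3) (β := Fin 3) le_rfl
end

section
/- The 3-dimensional hypercube graph Q₃ is a 3-connected planar graph that does not satisfy property C(4,1): there exist four vertices and a fifth vertex z such that no cycle of Q₃ contains all four vertices while avoiding z. -/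
/-- `G` contains a subdivision (topological minor) of `H`: an injection `f` of
branch vertices and, for each edge of `H`, a path in `G` between the images,
such that distinct paths meet only in shared branch vertices. -/
def ContainsSubdivision {W V : Type*} (H : SimpleGraph W) (G : SimpleGraph V) : Prop :=
  ∃ (f : W → V), Function.Injective f ∧
    ∃ P : ∀ a b : W, H.Adj a b → G.Walk (f a) (f b),
      (∀ a b hab, (P a b hab).IsPath) ∧
      (∀ a b hab, P b a (SimpleGraph.Adj.symm hab) = (P a b hab).reverse) ∧
      (∀ a b hab (c : W), f c ∈ (P a b hab).support → c = a ∨ c = b) ∧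
      (∀ a b hab c d hcd, s(a, b) ≠ s(c, d) → ∀ x,
        x ∈ (P a b hab).support → x ∈ (P c d hcd).support →
          (x = f a ∨ x = f b) ∧ (x = f c ∨ x = f d))

/-- Planarity via Kuratowski's characterization: `G` contains no subdivision
of `K₅` or of `K_{3,3}`. -/
def PlanarGraph {V : Type*} (G : SimpleGraph V) : Prop :=
  ¬ ContainsSubdivision (⊤ : SimpleGraph (Fin 5)) G ∧
  ¬ ContainsSubdivision (completeBipartiteGraph (Fin 3) (Fin 3)) G

/-- The 3-dimensional hypercube graph `Q₃`. -/
def CubeQ3 : SimpleGraph (Fin 3 → Bool) where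
  Adj x y := ∃! i, x i ≠ y i
  symm := by
    constructor
    rintro x y ⟨i, hi, hu⟩
    exact ⟨i, Ne.symm hi, fun j hj => hu j (Ne.symm hj)⟩
  loopless := by constructor; rintro x ⟨i, hi, _⟩; exact hi rfl

/-!
Colour each vertex of `Q₃` by the parity of its number of ones. Adjacent vertices get different
colours, so a cycle alternates colours and contains as many even as odd vertices. A cycle through
the four odd vertices therefore passes through all four even ones, `000` included.

`Q₃` is cubic, so it contains no subdivision of `K₅`, whose branch vertices have degree 4. A
subdivision of `K_{3,3}` has at most two subdividing vertices, as only two vertices of `Q₃` are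
not branch vertices. A path between branch vertices of the same colour has even length, hence at
least one subdividing vertex; and a 2-colouring of `K_{3,3}` with one monochromatic edge has at
least three. So all nine paths have odd length and at most one of them is not an edge: two branch
vertices on one side are adjacent to all three on the other, whereas two vertices of `Q₃` have at
most two common neighbours.
-/

open SimpleGraph Finset

namespace SimpleGraph

variable {V : Type*} {G : SimpleGraph V}

section Ball

variable [Fintype V] [DecidableEq V]

def finsetBall (G : SimpleGraph V) [DecidableRel G.Adj] (S : Finset V) : ℕ → Finset V
  | 0 => S
  | n + 1 => G.finsetBall S n ∪ univ.filter fun v => ∃ u ∈ G.finsetBall S n, G.Adj u v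

variable [DecidableRel G.Adj]

lemma reachable_of_mem_finsetBall {v w : V} {n : ℕ} (hw : w ∈ G.finsetBall {v} n) :
    G.Reachable v w := by
  induction n generalizing w with
  | zero => simp_all [finsetBall]
  | succ n ih =>
    simp only [finsetBall, mem_union, mem_filter] at hw
    rcases hw with hw | ⟨-, u, hu, huw⟩
    · exact ih hw
    · exact (ih hu).trans huw.reachable

lemma connected_of_finsetBall_eq_univ {v : V} {n : ℕ} (h : G.finsetBall {v} n = univ) :
    G.Connected := by
  have hv : ∀ w, G.Reachable v w := fun w => reachable_of_mem_finsetBall (h ▸ mem_univ w)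
  exact (connected_iff _).2 ⟨fun a b => (hv a).symm.trans (hv b), ⟨v⟩⟩

end Ball

namespace Walk

variable [DecidableEq V] {u v : V}

def interior (p : G.Walk u v) : Finset V := p.support.toFinset \ {u, v}

lemma card_interior {p : G.Walk u v} (hp : p.IsPath) (huv : u ≠ v) :
    #p.interior = p.length - 1 := by
  have hends : ({u, v} : Finset V) ⊆ p.support.toFinset := by
    simp [insert_subset_iff]
  rw [interior, card_sdiff_of_subset hends, List.toFinset_card_of_nodup hp.support_nodup,
    length_support, card_pair huv]
  omega

lemma mem_support_of_mem_interior {p : G.Walk u v} {x : V} (hx : x ∈ p.interior) :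
    x ∈ p.support := by
  simp only [interior, mem_sdiff, List.mem_toFinset] at hx
  exact hx.1

lemma ne_of_mem_interior {p : G.Walk u v} {x : V} (hx : x ∈ p.interior) : x ≠ u ∧ x ≠ v := by
  simp only [interior, mem_sdiff, mem_insert, mem_singleton, not_or] at hx
  exact hx.2

end Walk

lemma Coloring.countP_tail_support_sub (c : G.Coloring Bool) {u v : V} (p : G.Walk u v) :
    (p.support.tail.countP (c ·) : ℤ) - p.support.tail.countP (! c ·) =
      (c v).toNat - (c u).toNat := by
  induction p with
  | nil => simp
  | @cons u x v hux p ih =>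
    have hflip : c x = ! c u := by
      have := c.valid hux
      revert this; cases c u <;> cases c x <;> simp
    rw [Walk.support_cons, List.tail_cons, ← List.cons_head_tail (Walk.support_ne_nil p),
      Walk.head_support, List.countP_cons, List.countP_cons]
    rw [hflip] at ih ⊢
    cases hu : c u <;> simp [hu] at ih ⊢ <;> omega

lemma Coloring.countP_tail_support_eq_of_closed (c : G.Coloring Bool) {u : V} (p : G.Walk u u) :
    p.support.tail.countP (c ·) = p.support.tail.countP (! c ·) := by
  have := c.countP_tail_support_sub p
  omega

section Subdivision

variable {W : Type*} {H : SimpleGraph W} {f : W → V}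
  {P : ∀ a b : W, H.Adj a b → G.Walk (f a) (f b)}

lemma degree_le_degree_of_subdivision (hf : Function.Injective f)
    (hdisj : ∀ a b hab c d hcd, s(a, b) ≠ s(c, d) → ∀ x,
      x ∈ (P a b hab).support → x ∈ (P c d hcd).support →
        (x = f a ∨ x = f b) ∧ (x = f c ∨ x = f d))
    (a : W) [Fintype (H.neighborSet a)] [Fintype (G.neighborSet (f a))] :
    H.degree a ≤ G.degree (f a) := by
  have hnil : ∀ b (hab : H.Adj a b), ¬ (P a b hab).Nil :=
    fun b hab => Walk.not_nil_of_ne (hf.ne hab.ne)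
  let first : H.neighborSet a → G.neighborSet (f a) := fun b =>
    ⟨(P a b b.2).snd, Walk.adj_snd (hnil b b.2)⟩
  have hfirst : Function.Injective first := by
    rintro ⟨b, hb⟩ ⟨b', hb'⟩ hbb'
    have hsnd : (P a b hb).snd = (P a b' hb').snd := congrArg Subtype.val hbb'
    by_contra hne
    have hs : s(a, b) ≠ s(a, b') := fun h => hne (Subtype.ext (Sym2.congr_right.1 h))
    have hmem : (P a b hb).snd ∈ (P a b' hb').support := hsnd ▸ Walk.getVert_mem_support _ _
    obtain ⟨hx, hx'⟩ := hdisj a b hb a b' hb' hs _ (Walk.getVert_mem_support _ _) hmem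
    have hne_a : (P a b hb).snd ≠ f a := (Walk.adj_snd (hnil b hb)).ne.symm
    exact hne (Subtype.ext (hf ((hx.resolve_left hne_a).symm.trans (hx'.resolve_left hne_a))))
  rw [← card_neighborSet_eq_degree, ← card_neighborSet_eq_degree]
  exact Fintype.card_le_of_injective first hfirst

lemma sum_length_sub_one_add_card_le_of_subdivision [Fintype W] [Fintype V] [DecidableEq V]
    (hf : Function.Injective f) (hpath : ∀ a b hab, (P a b hab).IsPath)
    (hbranch : ∀ a b hab (c : W), f c ∈ (P a b hab).support → c = a ∨ c = b)
    (hdisj : ∀ a b hab c d hcd, s(a, b) ≠ s(c, d) → ∀ x,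
      x ∈ (P a b hab).support → x ∈ (P c d hcd).support →
        (x = f a ∨ x = f b) ∧ (x = f c ∨ x = f d))
    {ι : Type*} [Fintype ι] (a b : ι → W) (hab : ∀ i, H.Adj (a i) (b i))
    (hedge : ∀ i j, s(a i, b i) = s(a j, b j) → i = j) :
    ∑ i, ((P (a i) (b i) (hab i)).length - 1) + Fintype.card W ≤ Fintype.card V := by
  set J : ι → Finset V := fun i => (P (a i) (b i) (hab i)).interior
  have hJ_disj : (↑(univ : Finset ι) : Set ι).PairwiseDisjoint J := by
    intro i _ j _ hij
    refine Finset.disjoint_left.2 fun x hxi hxj => ?_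
    obtain ⟨hx, -⟩ := hdisj _ _ (hab i) _ _ (hab j) (fun h => hij (hedge i j h)) x
      (Walk.mem_support_of_mem_interior hxi) (Walk.mem_support_of_mem_interior hxj)
    have := Walk.ne_of_mem_interior hxi
    tauto
  have hJ_branch : Disjoint (univ.biUnion J) (univ.image f) := by
    refine Finset.disjoint_left.2 fun x hx hxf => ?_
    obtain ⟨i, -, hxi⟩ := mem_biUnion.1 hx
    obtain ⟨c, -, rfl⟩ := mem_image.1 hxf
    have := Walk.ne_of_mem_interior hxi
    rcases hbranch _ _ (hab i) c (Walk.mem_support_of_mem_interior hxi) with rfl | rfl <;> tauto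
  calc ∑ i, ((P (a i) (b i) (hab i)).length - 1) + Fintype.card W
      = #(univ.biUnion J) + #(univ.image f) := by
        rw [card_biUnion hJ_disj, card_image_of_injective _ hf, card_univ]
        congr 1
        exact sum_congr rfl fun i _ =>
          (Walk.card_interior (hpath _ _ _) (hf.ne (hab i).ne)).symm
    _ = #(univ.biUnion J ∪ univ.image f) := (card_union_of_disjoint hJ_branch).symm
    _ ≤ Fintype.card V := card_le_univ _

end Subdivision

end SimpleGraph

lemma three_le_card_monochromatic_pairs : ∀ cL cR : Fin 3 → Bool,
    (∃ e : Fin 3 × Fin 3, cL e.1 = cR e.2) → 3 ≤ #{e : Fin 3 × Fin 3 | cL e.1 = cR e.2} := by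
  decide

lemma exists_pair_notMem_of_card_le_one : ∀ T : Finset (Fin 3), #T ≤ 1 →
    ∃ a₁ a₂, a₁ ≠ a₂ ∧ a₁ ∉ T ∧ a₂ ∉ T := by
  decide

lemma exists_two_rows_eq_one {ℓ : Fin 3 × Fin 3 → ℕ} {cL cR : Fin 3 → Bool}
    (hpos : ∀ e, 1 ≤ ℓ e) (hsum : ∑ e, (ℓ e - 1) ≤ 2)
    (hpar : ∀ e, Even (ℓ e) ↔ cL e.1 = cR e.2) :
    ∃ a₁ a₂, a₁ ≠ a₂ ∧ ∀ b, ℓ (a₁, b) = 1 ∧ ℓ (a₂, b) = 1 := by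
  have hsum_on : ∀ (s : Finset (Fin 3 × Fin 3)) (k : ℕ), (∀ e ∈ s, k ≤ ℓ e - 1) → #s * k ≤ 2 :=
    fun s k hk => calc #s * k = #s • k := rfl
      _ ≤ ∑ e ∈ s, (ℓ e - 1) := card_nsmul_le_sum s _ k hk
      _ ≤ ∑ e, (ℓ e - 1) := sum_le_sum_of_subset (subset_univ s)
      _ ≤ 2 := hsum
  have hodd : ∀ e, Odd (ℓ e) := by
    by_contra! hev
    obtain ⟨e₀, he₀⟩ := hev
    have hmono := three_le_card_monochromatic_pairs cL cR
      ⟨e₀, (hpar e₀).1 (Nat.not_odd_iff_even.1 he₀)⟩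
    suffices ∀ e ∈ ({e | cL e.1 = cR e.2} : Finset _), 1 ≤ ℓ e - 1 by
      have := hsum_on _ 1 this; omega
    intro e he
    obtain ⟨k, hk⟩ := (hpar e).2 (mem_filter.1 he).2
    have := hpos e
    omega
  have hlong : #{e | ℓ e ≠ 1} ≤ 1 := by
    refine Nat.le_of_mul_le_mul_right (hsum_on _ 2 fun e he => ?_) two_pos
    obtain ⟨k, hk⟩ := hodd e
    have := (mem_filter.1 he).2
    omega
  obtain ⟨a₁, a₂, hne, h₁, h₂⟩ := exists_pair_notMem_of_card_le_one
    (({e | ℓ e ≠ 1} : Finset _).image Prod.fst) (card_image_le.trans hlong)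
  have hrow : ∀ a ∉ ({e | ℓ e ≠ 1} : Finset _).image Prod.fst, ∀ b, ℓ (a, b) = 1 :=
    fun a ha b => by_contra fun h => ha (mem_image.2 ⟨(a, b), mem_filter.2 ⟨mem_univ _, h⟩, rfl⟩)
  exact ⟨a₁, a₂, hne, fun b => ⟨hrow a₁ h₁ b, hrow a₂ h₂ b⟩⟩

instance : DecidableRel CubeQ3.Adj := fun x y =>
  inferInstanceAs (Decidable (∃ i, x i ≠ y i ∧ ∀ j, x j ≠ y j → j = i))

namespace CubeQ3

def parity (x : Fin 3 → Bool) : Bool := xor (x 0) (xor (x 1) (x 2))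

lemma parity_ne_of_adj : ∀ x y, CubeQ3.Adj x y → parity x ≠ parity y := by decide

def coloring : CubeQ3.Coloring Bool :=
  Coloring.mk parity fun h => parity_ne_of_adj _ _ h

lemma degree_eq_three : ∀ v, CubeQ3.degree v = 3 := by decide

lemma card_commonNeighbors_le_two :
    ∀ u v, u ≠ v → #(CubeQ3.neighborFinset u ∩ CubeQ3.neighborFinset v) ≤ 2 := by decide

set_option maxRecDepth 10000 in
lemma threeConnected : ThreeConnected CubeQ3 := by
  refine ⟨by decide, fun X hX => ?_⟩
  obtain ⟨v, hv⟩ : ∃ v : ↥((↑X : Set (Fin 3 → Bool))ᶜ),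
      (CubeQ3.induce (↑X : Set _)ᶜ).finsetBall {v} 3 = univ := by
    revert X; decide
  exact connected_of_finsetBall_eq_univ hv

lemma not_containsSubdivision_top_fin5 :
    ¬ ContainsSubdivision (⊤ : SimpleGraph (Fin 5)) CubeQ3 := by
  rintro ⟨f, hf, P, -, -, -, hdisj⟩
  have := degree_le_degree_of_subdivision (P := P) hf hdisj 0
  rw [degree_eq_three] at this
  simp at this

lemma not_containsSubdivision_K33 :
    ¬ ContainsSubdivision (completeBipartiteGraph (Fin 3) (Fin 3)) CubeQ3 := by
  rintro ⟨f, hf, P, hpath, -, hbranch, hdisj⟩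
  have hadj : ∀ e : Fin 3 × Fin 3,
      (completeBipartiteGraph (Fin 3) (Fin 3)).Adj (.inl e.1) (.inr e.2) := by simp
  set ℓ : Fin 3 × Fin 3 → ℕ := fun e => (P _ _ (hadj e)).length
  have hsum : ∑ e, (ℓ e - 1) ≤ 2 := by
    have := sum_length_sub_one_add_card_le_of_subdivision hf hpath hbranch hdisj
      (fun e : Fin 3 × Fin 3 => .inl e.1) (fun e => .inr e.2) hadj
      (fun e e' h => by simpa [Prod.ext_iff] using h)
    change ∑ e, (ℓ e - 1) + _ ≤ _ at this
    simp only [Fintype.card_sum, Fintype.card_fin, Fintype.card_fun, Fintype.card_bool] at this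
    omega
  have hpos : ∀ e, 1 ≤ ℓ e := fun e => Nat.pos_of_ne_zero fun h =>
    hf.ne Sum.inl_ne_inr (Walk.eq_of_length_eq_zero h)
  have hpar : ∀ e, Even (ℓ e) ↔ coloring (f (.inl e.1)) = coloring (f (.inr e.2)) :=
    fun e => (coloring.even_length_iff_congr _).trans Bool.eq_iff_iff.symm
  obtain ⟨a₁, a₂, hne, hrows⟩ := exists_two_rows_eq_one (cL := coloring ∘ f ∘ .inl)
    (cR := coloring ∘ f ∘ .inr) hpos hsum hpar
  have hcommon : univ.image (f ∘ .inr) ⊆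
      CubeQ3.neighborFinset (f (.inl a₁)) ∩ CubeQ3.neighborFinset (f (.inl a₂)) := by
    intro x hx
    obtain ⟨b, -, rfl⟩ := mem_image.1 hx
    simp only [mem_inter, mem_neighborFinset]
    exact ⟨Walk.adj_of_length_eq_one (hrows b).1, Walk.adj_of_length_eq_one (hrows b).2⟩
  have := (card_le_card hcommon).trans
    (card_commonNeighbors_le_two _ _ (hf.ne (Sum.inl_injective.ne hne)))
  rw [card_image_of_injective _ (hf.comp Sum.inr_injective)] at this
  simp at this

lemma not_propC_four_one : ¬ PropC CubeQ3 4 1 := by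
  intro h
  obtain ⟨u, c, hc, hin, hout⟩ := h {x | parity x} {fun _ => false} (by decide) (by decide)
    (by decide)
  set T := c.support.tail.toFinset
  have hcount : ∀ p : (Fin 3 → Bool) → Bool, c.support.tail.countP p = #(T.filter (p ·)) := by
    intro p
    rw [List.countP_eq_length_filter, ← List.toFinset_card_of_nodup (hc.support_nodup.filter p),
      List.toFinset_filter]
  have hodd : ({x | parity x} : Finset _) ⊆ T.filter (coloring ·) := by
    intro x hx
    have hxc := hin x hx
    rw [Walk.mem_support_iff] at hxc
    refine mem_filter.2 ⟨List.mem_toFinset.2 ?_, (mem_filter.1 hx).2⟩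
    rcases hxc with rfl | hxc
    · exact Walk.end_mem_tail_support hc.not_nil
    · exact hxc
  have heven : T.filter (! coloring ·) ⊆ ({x | !parity x} : Finset _) \ {fun _ => false} := by
    intro x hx
    obtain ⟨hxT, hxp⟩ := mem_filter.1 hx
    refine mem_sdiff.2 ⟨mem_filter.2 ⟨mem_univ _, hxp⟩, fun h0 => ?_⟩
    exact hout _ h0 (List.mem_of_mem_tail (List.mem_toFinset.1 hxT))
  have h4 := card_le_card hodd
  have h3 := card_le_card heven
  have hbal := coloring.countP_tail_support_eq_of_closed c
  rw [hcount, hcount] at hbal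
  have hcard_even : #(({x | !parity x} : Finset (Fin 3 → Bool)) \ {fun _ => false}) = 3 := by
    decide
  have hcard_odd : #({x | parity x} : Finset (Fin 3 → Bool)) = 4 := by decide
  omega

end CubeQ3

/-- `Q₃` is a 3-connected planar graph that does not satisfy `C(4,1)`. -/
theorem Q3_not_C41 :
    ThreeConnected CubeQ3 ∧ PlanarGraph CubeQ3 ∧ ¬ PropC CubeQ3 4 1 :=
  ⟨CubeQ3.threeConnected,
    ⟨CubeQ3.not_containsSubdivision_top_fin5, CubeQ3.not_containsSubdivision_K33⟩,
    CubeQ3.not_propC_four_one⟩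
end

section
/- If a graph G satisfies property C(3,1), then G is 3-connected. -/
/-!
To join `u` and `v` in `G - {a, b}`, take a third vertex `x ∉ {u, v, b}` and a cycle through
`u, v, x` avoiding `b`. The cycle splits into two `u`-`v` arcs meeting only at `u` and `v`,
so `a` lies on at most one of them and the other one avoids both `a` and `b`.
-/

namespace SimpleGraph

variable {V : Type*} {G : SimpleGraph V}

theorem Walk.IsCycle.exists_walk_avoiding {u v a : V} {c : G.Walk u u} (hc : c.IsCycle)
    (hv : v ∈ c.support) (hau : a ≠ u) (hav : a ≠ v) :
    ∃ p : G.Walk u v, p.support ⊆ c.support ∧ a ∉ p.support := by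
  obtain ⟨q, r, rfl⟩ := Walk.mem_support_iff_exists_append.1 hv
  by_cases haq : a ∈ q.support
  · refine ⟨r.reverse, ?_, fun har ↦ ?_⟩
    · rw [Walk.support_reverse, List.reverse_subset]
      exact Walk.support_subset_support_append_right q r
    have hdisj : q.support.tail.Disjoint r.support.tail := by
      have := hc.support_nodup
      rw [Walk.tail_support_append] at this
      exact List.disjoint_of_nodup_append this
    rw [Walk.support_reverse, List.mem_reverse] at har
    exact hdisj (((Walk.mem_support_iff q).1 haq).resolve_left hau)
      (((Walk.mem_support_iff r).1 har).resolve_left hav)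
  · exact ⟨q, Walk.support_subset_support_append_left q r, haq⟩

theorem Walk.IsCycle.exists_walk_avoiding_of_mem [DecidableEq V] {w u v a : V} {c : G.Walk w w}
    (hc : c.IsCycle) (hu : u ∈ c.support) (hv : v ∈ c.support) (hau : a ≠ u) (hav : a ≠ v) :
    ∃ p : G.Walk u v, p.support ⊆ c.support ∧ a ∉ p.support := by
  obtain ⟨p, hpc, hap⟩ := (hc.rotate hu).exists_walk_avoiding
    ((c.mem_support_rotate_iff u hu).2 hv) hau hav
  exact ⟨p, fun x hx ↦ (c.mem_support_rotate_iff u hu).1 (hpc hx), hap⟩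

def HasPropertyC31 (G : SimpleGraph V) : Prop :=
  ∀ x₁ x₂ x₃ z : V, x₁ ≠ x₂ → x₁ ≠ x₃ → x₂ ≠ x₃ →
    z ≠ x₁ → z ≠ x₂ → z ≠ x₃ → CycleThrough G {x₁, x₂, x₃} {z}

section Finite

variable [Fintype V] [DecidableEq V]

theorem HasPropertyC31.exists_walk_avoiding_pair (hcard : 4 ≤ Fintype.card V)
    (hG : G.HasPropertyC31) {u v a b : V} (huv : u ≠ v) (hau : a ≠ u) (hav : a ≠ v)
    (hbu : b ≠ u) (hbv : b ≠ v) : ∃ p : G.Walk u v, a ∉ p.support ∧ b ∉ p.support := by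
  obtain ⟨x, -, hx⟩ := Finset.exists_mem_notMem_of_card_lt_card (s := {u, v, b})
    (t := Finset.univ) (Finset.card_le_three.trans_lt (by rw [Finset.card_univ]; omega))
  simp only [Finset.mem_insert, Finset.mem_singleton, not_or] at hx
  obtain ⟨hxu, hxv, hxb⟩ := hx
  obtain ⟨w, c, hc, hthrough, havoid⟩ :=
    hG u v x b huv (Ne.symm hxu) (Ne.symm hxv) hbu hbv (Ne.symm hxb)
  obtain ⟨p, hpc, hap⟩ :=
    hc.exists_walk_avoiding_of_mem (hthrough u (by simp)) (hthrough v (by simp)) hau hav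
  exact ⟨p, hap, fun hbp ↦ havoid b rfl (hpc hbp)⟩

theorem HasPropertyC31.exists_walk_avoiding_finset (hcard : 4 ≤ Fintype.card V)
    (hG : G.HasPropertyC31) {X : Finset V} (hX : X.card ≤ 2) {u v : V} (hu : u ∉ X)
    (hv : v ∉ X) (huv : u ≠ v) : ∃ p : G.Walk u v, ∀ x ∈ p.support, x ∉ X := by
  have hXuv : X ⊆ {u, v}ᶜ := fun x hx ↦ by
    rw [Finset.mem_compl, Finset.mem_insert, Finset.mem_singleton]
    rintro (rfl | rfl) <;> contradiction
  have hcompl : 2 ≤ ({u, v}ᶜ : Finset V).card := by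
    have := Finset.card_le_two (a := u) (b := v)
    rw [Finset.card_compl]
    omega
  obtain ⟨Y, hXY, hYuv, hY⟩ := Finset.exists_subsuperset_card_eq hXuv hX hcompl
  obtain ⟨a, b, -, rfl⟩ := Finset.card_eq_two.1 hY
  simp only [Finset.insert_subset_iff, Finset.singleton_subset_iff, Finset.mem_compl,
    Finset.mem_insert, Finset.mem_singleton, not_or] at hYuv
  obtain ⟨⟨hau, hav⟩, hbu, hbv⟩ := hYuv
  obtain ⟨p, hap, hbp⟩ := hG.exists_walk_avoiding_pair hcard huv hau hav hbu hbv
  refine ⟨p, fun x hxp hxX ↦ ?_⟩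
  have hxab := hXY hxX
  rw [Finset.mem_insert, Finset.mem_singleton] at hxab
  rcases hxab with rfl | rfl <;> contradiction

end Finite

end SimpleGraph

/-- If `G` (with at least 4 vertices) satisfies property `C(3,1)`, then `G`
is 3-connected. -/
theorem C31_implies_threeConnected {V : Type*} [Fintype V] [DecidableEq V]
    (G : SimpleGraph V) (hcard : 4 ≤ Fintype.card V)
    (hC31 : ∀ x₁ x₂ x₃ z : V, x₁ ≠ x₂ → x₁ ≠ x₃ → x₂ ≠ x₃ →
      z ≠ x₁ → z ≠ x₂ → z ≠ x₃ → CycleThrough G {x₁, x₂, x₃} {z}) :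
    ∀ X : Finset V, X.card ≤ 2 → (G.induce ((↑X : Set V)ᶜ)).Connected := by
  intro X hX
  rw [SimpleGraph.connected_iff]
  constructor
  · rintro ⟨u, hu⟩ ⟨v, hv⟩
    rcases eq_or_ne u v with rfl | huv
    · rfl
    obtain ⟨p, hp⟩ := SimpleGraph.HasPropertyC31.exists_walk_avoiding_finset hcard hC31 hX hu hv huv
    exact ⟨p.induce _ hp⟩
  · obtain ⟨v, -, hv⟩ := Finset.exists_mem_notMem_of_card_lt_card (s := X) (t := Finset.univ)
      (by rw [Finset.card_univ]; omega)
    exact ⟨⟨v, hv⟩⟩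
end
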